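/- arXiv:2403.08105 — 7 statements merged into one kernel-verified Lean document; each statement's English description precedes it below -/
import Mathlib

section
/- Let u and v be points of the integer lattice ℤ² at ℓ¹ distance d ≥ 1 from each other, i.e., v ∈ S_d(u). Then for every integer j with 1 ≤ j ≤ 2d, the number of lattice points at ℓ¹ distance exactly j from v and at ℓ¹ distance at most d from u satisfies j/2 ≤ |S_j(v) ∩ B_d(u)| ≤ 4j; in particular |S_j(v) ∩ B_d(u)| = Θ(j). -/
set_option maxHeartbeats 1000000

/-- The ℓ¹ (lattice) distance between two points of `ℤ²`. -/
def l1Dist (w w' : ℤ × ℤ) : ℕ :=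
  (w.1 - w'.1).natAbs + (w.2 - w'.2).natAbs

private lemma upper_inj (v : ℤ × ℤ) (d j : ℕ) (u : ℤ × ℤ) :
    Set.InjOn (fun w : ℤ × ℤ =>
      if 0 ≤ w.2 - v.2 then (j : ℤ) - (w.1 - v.1) else 3 * j + (w.1 - v.1))
      {w : ℤ × ℤ | l1Dist w v = j ∧ l1Dist w u ≤ d} := by
  intro w hw w' hw' hww
  obtain ⟨h1, _⟩ := hw
  obtain ⟨h1', _⟩ := hw'
  simp only [l1Dist] at h1 h1'
  simp only at hww
  have : w.1 = w'.1 ∧ w.2 = w'.2 := by split_ifs at hww <;> omega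
  exact Prod.ext this.1 this.2

private lemma upper_maps (v : ℤ × ℤ) (d j : ℕ) (u : ℤ × ℤ) (hj1 : 1 ≤ j) :
    ∀ w ∈ {w : ℤ × ℤ | l1Dist w v = j ∧ l1Dist w u ≤ d},
      (if 0 ≤ w.2 - v.2 then (j : ℤ) - (w.1 - v.1) else 3 * j + (w.1 - v.1)) ∈
        (Finset.Ico (0 : ℤ) (4 * j) : Set ℤ) := by
  intro w hw
  obtain ⟨h1, _⟩ := hw
  simp only [l1Dist] at h1
  simp only [Finset.coe_Ico, Set.mem_Ico]
  split_ifs with h <;> omega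

private lemma set_fin (u v : ℤ × ℤ) (d j : ℕ) (hj1 : 1 ≤ j) :
    {w : ℤ × ℤ | l1Dist w v = j ∧ l1Dist w u ≤ d}.Finite := by
  refine Set.Finite.of_finite_image (Set.Finite.subset (Finset.finite_toSet
    (Finset.Ico (0 : ℤ) (4 * j))) ?_) (upper_inj v d j u)
  rintro y ⟨w, hw, rfl⟩
  exact upper_maps v d j u hj1 w hw

private lemma upper_bound (u v : ℤ × ℤ) (d j : ℕ) (hj1 : 1 ≤ j) :
    {w : ℤ × ℤ | l1Dist w v = j ∧ l1Dist w u ≤ d}.ncard ≤ 4 * j := by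
  have := Set.ncard_le_ncard_of_injOn _ (upper_maps v d j u hj1) (upper_inj v d j u)
    (Finset.finite_toSet _)
  rw [Set.ncard_coe_finset, Int.card_Ico] at this
  omega

private def sVal (d j : ℕ) : ℤ := (min (j : ℤ) (2 * d - j)) / 2

private def lVal (a b : ℤ) (d j : ℕ) : ℤ :=
  max 0 (min (a.natAbs : ℤ) ((j : ℤ) - (b.natAbs : ℤ)) - sVal d j)

private def rVal (a b : ℤ) (d j : ℕ) : ℤ :=
  min (j : ℤ) (max (a.natAbs : ℤ) ((j : ℤ) - (b.natAbs : ℤ)) + sVal d j)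

private lemma mem1 (a b : ℤ) (d j : ℕ) (hab : a.natAbs + b.natAbs = d)
    (hj2 : j ≤ 2 * d) (x : ℤ) (hx1 : lVal a b d j ≤ x) (hx2 : x ≤ rVal a b d j) :
    (if 0 ≤ a then x else -x).natAbs
      + (if 0 ≤ b then ((j : ℤ) - x) else -((j : ℤ) - x)).natAbs = j := by
  simp only [lVal, rVal, sVal] at hx1 hx2
  split_ifs <;> omega

private lemma mem2 (a b : ℤ) (d j : ℕ) (hab : a.natAbs + b.natAbs = d)
    (hj2 : j ≤ 2 * d) (x : ℤ) (hx1 : lVal a b d j ≤ x) (hx2 : x ≤ rVal a b d j) :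
    ((if 0 ≤ a then x else -x) - a).natAbs
      + ((if 0 ≤ b then ((j : ℤ) - x) else -((j : ℤ) - x)) - b).natAbs ≤ d := by
  simp only [lVal, rVal, sVal] at hx1 hx2
  split_ifs <;> omega

private lemma size_ineq (a b : ℤ) (d j : ℕ) (hd : 1 ≤ d)
    (hab : a.natAbs + b.natAbs = d) (hj1 : 1 ≤ j) (hj2 : j ≤ 2 * d) :
    j ≤ 2 * (rVal a b d j + 1 - lVal a b d j).toNat := by
  simp only [lVal, rVal, sVal]
  omega

private lemma lower_bound (u v : ℤ × ℤ) (d : ℕ) (hd : 1 ≤ d) (hv : l1Dist v u = d)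
    (j : ℕ) (hj1 : 1 ≤ j) (hj2 : j ≤ 2 * d) :
    j ≤ 2 * {w : ℤ × ℤ | l1Dist w v = j ∧ l1Dist w u ≤ d}.ncard := by
  have hab : (u.1 - v.1).natAbs + (u.2 - v.2).natAbs = d := by
    simp only [l1Dist] at hv; omega
  set a : ℤ := u.1 - v.1 with ha
  set b : ℤ := u.2 - v.2 with hb
  have hmapF : ∀ x ∈ (Finset.Icc (lVal a b d j) (rVal a b d j) : Set ℤ),
      ((v.1 + (if 0 ≤ a then x else -x),
        v.2 + (if 0 ≤ b then ((j : ℤ) - x) else -((j : ℤ) - x))) : ℤ × ℤ) ∈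
      {w : ℤ × ℤ | l1Dist w v = j ∧ l1Dist w u ≤ d} := by
    intro x hx
    simp only [Finset.coe_Icc, Set.mem_Icc] at hx
    constructor
    · show (v.1 + (if 0 ≤ a then x else -x) - v.1).natAbs
        + (v.2 + (if 0 ≤ b then ((j : ℤ) - x) else -((j : ℤ) - x)) - v.2).natAbs = j
      rw [add_sub_cancel_left, add_sub_cancel_left]
      exact mem1 a b d j hab hj2 x hx.1 hx.2
    · show (v.1 + (if 0 ≤ a then x else -x) - u.1).natAbs
        + (v.2 + (if 0 ≤ b then ((j : ℤ) - x) else -((j : ℤ) - x)) - u.2).natAbs ≤ d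
      have e1 : v.1 + (if 0 ≤ a then x else -x) - u.1 = (if 0 ≤ a then x else -x) - a := by
        rw [ha]; ring
      have e2 : v.2 + (if 0 ≤ b then ((j : ℤ) - x) else -((j : ℤ) - x)) - u.2
          = (if 0 ≤ b then ((j : ℤ) - x) else -((j : ℤ) - x)) - b := by
        rw [hb]; ring
      rw [e1, e2]
      exact mem2 a b d j hab hj2 x hx.1 hx.2
  have hinjF : Set.InjOn (fun x : ℤ =>
      ((v.1 + (if 0 ≤ a then x else -x),
        v.2 + (if 0 ≤ b then ((j : ℤ) - x) else -((j : ℤ) - x))) : ℤ × ℤ))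
      (Finset.Icc (lVal a b d j) (rVal a b d j) : Set ℤ) := by
    intro x hx y hy hxy
    have h1 := congrArg Prod.fst hxy
    simp only at h1
    split_ifs at h1 <;> omega
  have hc := Set.ncard_le_ncard_of_injOn _ hmapF hinjF (set_fin u v d j hj1)
  rw [Set.ncard_coe_finset, Int.card_Icc] at hc
  have hsize := size_ineq a b d j hd hab hj1 hj2
  omega

/-- if `v` is at ℓ¹ distance `d ≥ 1` from `u` in `ℤ²`, then for every
`1 ≤ j ≤ 2d`, the set `S_j(v) ∩ B_d(u)` of points at distance exactly `j` from `v` and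
at most `d` from `u` has size between `j/2` and `4j`; in particular it is `Θ(j)`. -/
theorem statement5 (u v : ℤ × ℤ) (d : ℕ) (hd : 1 ≤ d) (hv : l1Dist v u = d)
    (j : ℕ) (hj1 : 1 ≤ j) (hj2 : j ≤ 2 * d) :
    (j : ℝ) / 2 ≤ ({w : ℤ × ℤ | l1Dist w v = j ∧ l1Dist w u ≤ d}.ncard : ℝ) ∧
    ({w : ℤ × ℤ | l1Dist w v = j ∧ l1Dist w u ≤ d}.ncard : ℝ) ≤ 4 * j := by
  have hub := upper_bound u v d j hj1
  have hlb := lower_bound u v d hd hv j hj1 hj2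
  constructor
  · rw [div_le_iff₀ (by norm_num : (0:ℝ) < 2)]
    exact_mod_cast (by omega : j ≤ {w : ℤ × ℤ | l1Dist w v = j ∧ l1Dist w u ≤ d}.ncard * 2)
  · exact_mod_cast hub
end

section
/- Let n ≥ 2 and k ≥ 1 be integers, and let r be an integer with 3·√(k·log₂ n) ≤ r and 2r < n. Let each of the n² vertices of the n×n torus grid be included in a random set H independently with probability 1/k. Then with probability at least 1 − n^{−1.24}, every vertex u of the torus satisfies |B_r(u) ∩ H| ≥ 9·log₂ n. -/
open Finset MeasureTheory
open scoped ENNReal NNReal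

/-- Lattice (ℓ¹) distance on the `n × n` torus grid, with vertices `Fin n × Fin n`.
The representative of `x₁ - x₂` modulo `n` is `(x₁ + n - x₂) % n`. -/
def torusDist (n : ℕ) (u v : Fin n × Fin n) : ℕ :=
  min ((u.1.val + n - v.1.val) % n) (n - (u.1.val + n - v.1.val) % n) +
  min ((u.2.val + n - v.2.val) % n) (n - (u.2.val + n - v.2.val) % n)

/-- The product Bernoulli measure on subsets (indicator functions) of the vertices of the
`n × n` torus grid, where each vertex is included independently with probability `1/k`. -/
noncomputable def highwayMeasure (n k : ℕ) (hk : 1 ≤ k) :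
    Measure ((Fin n × Fin n) → Bool) :=
  Measure.pi fun _ =>
    (PMF.bernoulli (k : ℝ≥0)⁻¹ (inv_le_one_of_one_le₀ (by exact_mod_cast hk))).toMeasure

/-- add an integer offset to a `Fin n`. -/
def fadd {n : ℕ} (a : Fin n) (x : ℤ) : Fin n :=
  ⟨(((a : ℤ) + x) % n).toNat, by
    have hn : 0 < n := a.pos
    rw [Int.toNat_lt (Int.emod_nonneg _ (by exact_mod_cast hn.ne'))]
    exact Int.emod_lt_of_pos _ (by exact_mod_cast hn)⟩

lemma fadd_coe {n : ℕ} (a : Fin n) (x : ℤ) :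
    ((fadd a x).val : ℤ) = ((a : ℤ) + x) % n := by
  have hn : 0 < n := a.pos
  simp only [fadd]
  exact Int.toNat_of_nonneg (Int.emod_nonneg _ (by exact_mod_cast hn.ne'))

lemma fadd_inj {n r : ℕ} (hr2 : 2 * r < n) (a : Fin n) {x y : ℤ}
    (hx : x.natAbs ≤ r) (hy : y.natAbs ≤ r) (h : fadd a x = fadd a y) : x = y := by
  have h1 : ((a : ℤ) + x) % n = ((a : ℤ) + y) % n := by
    rw [← fadd_coe a x, ← fadd_coe a y, h]
  have hd : (n : ℤ) ∣ ((a : ℤ) + y) - ((a : ℤ) + x) := Int.ModEq.dvd h1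
  have hd2 : (n : ℤ) ∣ y - x := by
    have : ((a : ℤ) + y) - ((a : ℤ) + x) = y - x := by ring
    rwa [this] at hd
  have habs : |y - x| < (n : ℤ) := by
    rw [Int.abs_eq_natAbs]; omega
  have := Int.eq_zero_of_abs_lt_dvd hd2 habs
  omega


lemma min_mod_le {n : ℕ} (hn : 0 < n) {x : ℤ} (hx : x.natAbs < n) {w : ℕ}
    (hw : (w : ℤ) = (-x) % n) : min w (n - w) ≤ x.natAbs := by
  rcases le_or_gt 0 x with h | h
  · rcases eq_or_lt_of_le h with h0 | h0
    · have : w = 0 := by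
        have : (w : ℤ) = 0 := by rw [hw, ← h0]; simp
        omega
      simp [this]
    · have hmod : (-x) % n = n - x := by
        have h1 : (-x) % (n : ℤ) = (-x + n * 1) % n := (Int.add_mul_emod_self_left (-x) (n:ℤ) 1).symm
        rw [h1]
        have : -x + (n : ℤ) * 1 = n - x := by ring
        rw [this]
        apply Int.emod_eq_of_lt <;> omega
      have hwv : (w : ℤ) = n - x := by rw [hw, hmod]
      have : n - w = x.natAbs := by omega
      omega
  · have hmod : (-x) % n = -x := by
      apply Int.emod_eq_of_lt <;> omega
    have : w = x.natAbs := by omega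
    omega

lemma coord_mod {n : ℕ} (a : Fin n) (x : ℤ) :
    (((a.val + n - (fadd a x).val) % n : ℕ) : ℤ) = (-x) % n := by
  have hn : 0 < n := a.pos
  have hc : (fadd a x).val < n := (fadd a x).isLt
  have hle : (fadd a x).val ≤ a.val + n := by omega
  have hcast : ((a.val + n - (fadd a x).val : ℕ) : ℤ)
      = (a.val : ℤ) + n - (fadd a x).val := by omega
  push_cast
  rw [hcast, fadd_coe]
  conv_lhs => rw [Int.sub_emod, Int.emod_emod_of_dvd _ dvd_rfl, ← Int.sub_emod]
  have : (a.val : ℤ) + n - ((a : ℤ) + x) = -x + n * 1 := by ring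
  rw [this, Int.add_mul_emod_self_left]

lemma coord_min_le {n r : ℕ} (hr2 : 2 * r < n) (a : Fin n) {x : ℤ} (hx : x.natAbs ≤ r) :
    min ((a.val + n - (fadd a x).val) % n) (n - (a.val + n - (fadd a x).val) % n)
      ≤ x.natAbs := by
  have hn : 0 < n := a.pos
  exact min_mod_le hn (by omega) (coord_mod a x)

lemma mem_ball_of_offset {n r : ℕ} (hr2 : 2 * r < n) (u : Fin n × Fin n) {x y : ℤ}
    (hxy : x.natAbs + y.natAbs ≤ r) :
    torusDist n u (fadd u.1 x, fadd u.2 y) ≤ r := by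
  have h1 := coord_min_le hr2 u.1 (x := x) (by omega)
  have h2 := coord_min_le hr2 u.2 (x := y) (by omega)
  unfold torusDist
  dsimp only
  omega

lemma ball_card_ge {n r : ℕ} (hr2 : 2 * r < n) (hn : 0 < n) (u : Fin n × Fin n) :
    2 * r ^ 2 ≤ (univ.filter fun v => torusDist n u v ≤ r).card := by
  classical
  -- offset sets
  set f1 : ℤ × ℤ → ℤ × ℤ := fun p => (p.1 - p.2, p.1 + p.2 - r) with hf1
  set f2 : ℤ × ℤ → ℤ × ℤ := fun p => (p.1 - p.2, p.1 + p.2 - (r - 1)) with hf2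
  set O1 : Finset (ℤ × ℤ) := (Finset.Icc (0:ℤ) r ×ˢ Finset.Icc (0:ℤ) r).image f1 with hO1
  set O2 : Finset (ℤ × ℤ) :=
    (Finset.Icc (0:ℤ) (r-1) ×ˢ Finset.Icc (0:ℤ) (r-1)).image f2 with hO2
  have hmem1 : ∀ p ∈ O1, p.1.natAbs + p.2.natAbs ≤ r := by
    intro p hp
    simp only [hO1, Finset.mem_image, Finset.mem_product, Finset.mem_Icc] at hp
    obtain ⟨q, ⟨⟨h1, h2⟩, h3, h4⟩, rfl⟩ := hp
    simp only [hf1]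
    omega
  have hmem2 : ∀ p ∈ O2, p.1.natAbs + p.2.natAbs ≤ r := by
    intro p hp
    simp only [hO2, Finset.mem_image, Finset.mem_product, Finset.mem_Icc] at hp
    obtain ⟨q, ⟨⟨h1, h2⟩, h3, h4⟩, rfl⟩ := hp
    simp only [hf2]
    omega
  have hdisj : Disjoint O1 O2 := by
    rw [Finset.disjoint_left]
    intro p hp1 hp2
    simp only [hO1, hO2, Finset.mem_image, Finset.mem_product, Finset.mem_Icc] at hp1 hp2
    obtain ⟨q, ⟨⟨h1, h2⟩, h3, h4⟩, hq⟩ := hp1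
    obtain ⟨q', ⟨⟨h1', h2'⟩, h3', h4'⟩, hq'⟩ := hp2
    simp only [hf1, hf2, Prod.ext_iff] at hq hq'
    omega
  have hcard1 : O1.card = (r + 1) * (r + 1) := by
    rw [hO1, Finset.card_image_of_injOn, Finset.card_product, Int.card_Icc]
    · simp only [sub_zero]
      have : ((r : ℤ) + 1).toNat = r + 1 := by omega
      rw [this]
    · intro a _ b _ hab
      simp only [hf1, Prod.ext_iff] at hab
      obtain ⟨h1, h2⟩ := hab
      exact Prod.ext (by omega) (by omega)
  have hcard2 : O2.card = r * r := by
    rw [hO2, Finset.card_image_of_injOn, Finset.card_product, Int.card_Icc]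
    · simp only [sub_zero]
      have : ((r : ℤ) - 1 + 1).toNat = r := by omega
      rw [this]
    · intro a _ b _ hab
      simp only [hf2, Prod.ext_iff] at hab
      obtain ⟨h1, h2⟩ := hab
      exact Prod.ext (by omega) (by omega)
  set D : Finset (ℤ × ℤ) := O1 ∪ O2 with hD
  have hmemD : ∀ p ∈ D, p.1.natAbs + p.2.natAbs ≤ r := by
    intro p hp
    rcases Finset.mem_union.mp hp with h | h
    exacts [hmem1 p h, hmem2 p h]
  have hcardD : D.card = (r + 1) * (r + 1) + r * r := by
    rw [hD, Finset.card_union_of_disjoint hdisj, hcard1, hcard2]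
  -- map into the torus
  set g : ℤ × ℤ → Fin n × Fin n := fun p => (fadd u.1 p.1, fadd u.2 p.2) with hg
  have hginj : Set.InjOn g D := by
    intro p hp q hq hpq
    have hp' := hmemD p hp
    have hq' := hmemD q hq
    simp only [hg, Prod.ext_iff] at hpq
    obtain ⟨h1, h2⟩ := hpq
    exact Prod.ext (fadd_inj hr2 u.1 (by omega) (by omega) h1)
      (fadd_inj hr2 u.2 (by omega) (by omega) h2)
  have hsub : D.image g ⊆ univ.filter fun v => torusDist n u v ≤ r := by
    intro v hv
    obtain ⟨p, hp, rfl⟩ := Finset.mem_image.mp hv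
    simp only [Finset.mem_filter, Finset.mem_univ, true_and]
    exact mem_ball_of_offset hr2 u (hmemD p hp)
  calc 2 * r ^ 2 ≤ (r + 1) * (r + 1) + r * r := by nlinarith
    _ = D.card := hcardD.symm
    _ = (D.image g).card := (Finset.card_image_of_injOn hginj).symm
    _ ≤ _ := Finset.card_le_card hsub


section Meas
variable {n k : ℕ} (hk : 1 ≤ k)

noncomputable def bern (k : ℕ) (hk : 1 ≤ k) : Measure Bool :=
  (PMF.bernoulli (k : ℝ≥0)⁻¹ (inv_le_one_of_one_le₀ (by exact_mod_cast hk))).toMeasure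

lemma bern_singleton (b : Bool) :
    bern k hk {b} = bif b then (k : ℝ≥0∞)⁻¹ else 1 - (k : ℝ≥0∞)⁻¹ := by
  rw [bern, PMF.toMeasure_apply_singleton _ _ (measurableSet_singleton b),
    PMF.bernoulli_apply]
  have hk0 : (k : ℝ≥0) ≠ 0 := by exact_mod_cast (show k ≠ 0 by omega)
  cases b <;> simp [ENNReal.coe_sub, ENNReal.coe_inv hk0]

instance bern_prob (k : ℕ) (hk : 1 ≤ k) : IsProbabilityMeasure (bern k hk) := by
  unfold bern; infer_instance

lemma mu_singleton (ω : (Fin n × Fin n) → Bool) :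
    Measure.pi (fun _ : Fin n × Fin n => bern k hk) {ω}
      = ∏ v : Fin n × Fin n, bern k hk {ω v} := by
  rw [← Set.univ_pi_singleton ω, Measure.pi_pi]

-- the key factorization
lemma sum_weight (P : Fin n × Fin n → Prop) [DecidablePred P] :
    ∑ ω : (Fin n × Fin n) → Bool,
        (Measure.pi (fun _ : Fin n × Fin n => bern k hk) {ω}) *
          (2⁻¹ : ℝ≥0∞) ^ (univ.filter fun v => P v ∧ ω v = true).card
      = ENNReal.ofReal (1 - 1 / (2 * k)) ^ (univ.filter P).card := by
  classical
  have hk0 : (0:ℝ) < k := by exact_mod_cast hk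
  have hp1 : ((k:ℝ)⁻¹) ≤ 1 := by
    rw [inv_le_one_iff₀]; right; exact_mod_cast hk
  have hptrue : bern k hk {true} = ENNReal.ofReal (k:ℝ)⁻¹ := by
    rw [bern_singleton]
    simp only [cond_true]
    rw [← ENNReal.ofReal_natCast k, ← ENNReal.ofReal_inv_of_pos hk0]
  have hpfalse : bern k hk {false} = ENNReal.ofReal (1 - (k:ℝ)⁻¹) := by
    rw [bern_singleton]
    simp only [cond_false]
    rw [ENNReal.ofReal_sub _ (by positivity), ENNReal.ofReal_one,
      ← ENNReal.ofReal_natCast k, ← ENNReal.ofReal_inv_of_pos hk0]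
  set q : ℝ≥0∞ := ENNReal.ofReal (1 - 1 / (2 * k)) with hq
  have step1 : ∀ ω : (Fin n × Fin n) → Bool,
      (Measure.pi (fun _ : Fin n × Fin n => bern k hk) {ω}) *
        (2⁻¹ : ℝ≥0∞) ^ (univ.filter fun v => P v ∧ ω v = true).card
      = ∏ v : Fin n × Fin n,
          (bern k hk {ω v} * (if P v ∧ ω v = true then (2⁻¹ : ℝ≥0∞) else 1)) := by
    intro ω
    rw [mu_singleton, Finset.prod_mul_distrib]
    congr 1
    rw [Finset.prod_ite (fun _ => (2⁻¹:ℝ≥0∞)) (fun _ => (1:ℝ≥0∞))]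
    simp [Finset.prod_const]
  calc ∑ ω : (Fin n × Fin n) → Bool,
        (Measure.pi (fun _ : Fin n × Fin n => bern k hk) {ω}) *
          (2⁻¹ : ℝ≥0∞) ^ (univ.filter fun v => P v ∧ ω v = true).card
      = ∑ ω : (Fin n × Fin n) → Bool, ∏ v : Fin n × Fin n,
          (bern k hk {ω v} * (if P v ∧ ω v = true then (2⁻¹ : ℝ≥0∞) else 1)) := by
        exact Finset.sum_congr rfl fun ω _ => step1 ω
    _ = ∏ v : Fin n × Fin n, ∑ b : Bool,
          (bern k hk {b} * (if P v ∧ b = true then (2⁻¹ : ℝ≥0∞) else 1)) := by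
        rw [Finset.prod_univ_sum (fun _ => (univ : Finset Bool))]
        rw [Fintype.piFinset_univ]
    _ = ∏ v : Fin n × Fin n, (if P v then q else 1) := by
        refine Finset.prod_congr rfl fun v _ => ?_
        rw [Fintype.sum_bool]
        have htt : (P v ∧ true = true) = P v := by simp
        have hff : (P v ∧ false = true) = False := by simp
        have h2 : (2⁻¹ : ℝ≥0∞) = ENNReal.ofReal (2⁻¹ : ℝ) := by
          rw [ENNReal.ofReal_inv_of_pos two_pos, ENNReal.ofReal_ofNat]
        simp only [htt, hff, if_false, mul_one, and_true]
        by_cases hP : P v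
        · simp only [hP, if_true]
          rw [hptrue, hpfalse, hq, h2,
            ← ENNReal.ofReal_mul (by positivity),
            ← ENNReal.ofReal_add (by positivity) (sub_nonneg.mpr hp1)]
          congr 1
          field_simp
          ring
        · simp only [hP, if_false, mul_one]
          rw [hptrue, hpfalse,
            ← ENNReal.ofReal_add (by positivity) (sub_nonneg.mpr hp1),
            ← ENNReal.ofReal_one]
          congr 1
          ring
    _ = q ^ (univ.filter P).card := by
        rw [Finset.prod_ite (fun _ => q) (fun _ => (1:ℝ≥0∞))]
        simp [Finset.prod_const]
end Meas

section Meas2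
variable {n k : ℕ}

lemma chernoff_ball (hk : 1 ≤ k) (P : Fin n × Fin n → Prop) [DecidablePred P]
    (a : ℝ) (ha : 0 ≤ a) :
    Measure.pi (fun _ : Fin n × Fin n => bern k hk)
        {ω | ((univ.filter fun v => P v ∧ ω v = true).card : ℝ) < a}
      ≤ (2:ℝ≥0∞) ^ a * ENNReal.ofReal (1 - 1/(2*k)) ^ (univ.filter P).card := by
  classical
  set μ := Measure.pi (fun _ : Fin n × Fin n => bern k hk) with hμ
  set cnt : ((Fin n × Fin n) → Bool) → ℕ :=
    fun ω => (univ.filter fun v => P v ∧ ω v = true).card with hcnt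
  set S : Finset ((Fin n × Fin n) → Bool) :=
    univ.filter (fun ω => (cnt ω : ℝ) < a) with hS
  have hset : {ω | ((univ.filter fun v => P v ∧ ω v = true).card : ℝ) < a}
      = ⋃ ω ∈ S, {ω} := by
    ext ω
    simp [hS, hcnt]
  have h2ne : (2:ℝ≥0∞) ≠ 0 := by norm_num
  have h2net : (2:ℝ≥0∞) ≠ ⊤ := by norm_num
  have key : ∀ ω, (cnt ω : ℝ) < a →
      (1:ℝ≥0∞) ≤ (2:ℝ≥0∞) ^ a * (2⁻¹ : ℝ≥0∞) ^ cnt ω := by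
    intro ω hω
    have hinv : (2⁻¹ : ℝ≥0∞) ^ cnt ω = (2:ℝ≥0∞) ^ (-(cnt ω : ℝ)) := by
      rw [ENNReal.rpow_neg, ← ENNReal.rpow_natCast, ← ENNReal.inv_rpow]
    rw [hinv, ← ENNReal.rpow_add _ _ h2ne h2net]
    calc (1:ℝ≥0∞) = (2:ℝ≥0∞) ^ (0:ℝ) := by rw [ENNReal.rpow_zero]
      _ ≤ _ := ENNReal.rpow_le_rpow_of_exponent_le one_le_two (by linarith)
  calc μ {ω | ((univ.filter fun v => P v ∧ ω v = true).card : ℝ) < a}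
      ≤ ∑ ω ∈ S, μ {ω} := by
        rw [hset]; exact measure_biUnion_finset_le S _
    _ ≤ ∑ ω ∈ S, μ {ω} * ((2:ℝ≥0∞) ^ a * (2⁻¹ : ℝ≥0∞) ^ cnt ω) := by
        refine Finset.sum_le_sum fun ω hω => ?_
        have := key ω (by simpa [hS] using hω)
        calc μ {ω} = μ {ω} * 1 := (mul_one _).symm
          _ ≤ _ := mul_le_mul_right this _
    _ ≤ ∑ ω : (Fin n × Fin n) → Bool, μ {ω} * ((2:ℝ≥0∞) ^ a * (2⁻¹ : ℝ≥0∞) ^ cnt ω) :=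
        Finset.sum_le_sum_of_subset (Finset.subset_univ S)
    _ = (2:ℝ≥0∞) ^ a * ∑ ω : (Fin n × Fin n) → Bool, μ {ω} * (2⁻¹ : ℝ≥0∞) ^ cnt ω := by
        rw [Finset.mul_sum]
        exact Finset.sum_congr rfl fun ω _ => by ring
    _ = (2:ℝ≥0∞) ^ a * ENNReal.ofReal (1 - 1/(2*k)) ^ (univ.filter P).card := by
        rw [sum_weight hk P]

end Meas2


lemma real_final (n k r : ℕ) (hn : 2 ≤ n) (hk : 1 ≤ k)
    (hr1 : 3 * Real.sqrt (k * Real.logb 2 n) ≤ r) :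
    (n:ℝ) * n * ((2:ℝ) ^ (9 * Real.logb 2 n) * (1 - 1/(2*(k:ℝ))) ^ (2*r^2))
      ≤ (n:ℝ) ^ (-(1.24:ℝ)) := by
  have hn1 : (1:ℝ) ≤ n := by exact_mod_cast Nat.one_le_of_lt hn
  have hn0 : (0:ℝ) < n := by linarith
  have hk0 : (0:ℝ) < k := by exact_mod_cast hk
  have hL1 : 1 ≤ Real.logb 2 n := by
    rw [Real.le_logb_iff_rpow_le one_lt_two hn0]
    simpa using (by exact_mod_cast hn : (2:ℝ) ≤ n)
  set L := Real.logb 2 n with hL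
  have hk1 : (1:ℝ) ≤ k := by exact_mod_cast hk
  have hx0 : (0:ℝ) ≤ 1 - 1/(2*(k:ℝ)) := by
    have : 1/(2*(k:ℝ)) ≤ 1/2 := by
      rw [div_le_div_iff₀ (by positivity) (by norm_num)]
      nlinarith
    linarith
  -- step 1 : x^M ≤ exp (-(r^2/k))
  have hexp1 : (1 - 1/(2*(k:ℝ))) ≤ Real.exp (-(1/(2*(k:ℝ)))) := by
    have := Real.add_one_le_exp (-(1/(2*(k:ℝ))))
    linarith
  have hpow : (1 - 1/(2*(k:ℝ))) ^ (2*r^2) ≤ Real.exp (-(((r:ℝ)^2)/k)) := by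
    calc (1 - 1/(2*(k:ℝ))) ^ (2*r^2) ≤ (Real.exp (-(1/(2*(k:ℝ))))) ^ (2*r^2) :=
          pow_le_pow_left₀ hx0 hexp1 _
      _ = Real.exp ((2*r^2 : ℕ) * (-(1/(2*(k:ℝ))))) := by rw [← Real.exp_nat_mul]
      _ = Real.exp (-(((r:ℝ)^2)/k)) := by
          congr 1
          push_cast
          field_simp
  -- step 2 : r^2/k ≥ 9 L
  have hsq : 9 * ((k:ℝ) * L) ≤ (r:ℝ)^2 := by
    have hkL : (0:ℝ) ≤ (k:ℝ) * L := by positivity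
    have h3 : (0:ℝ) ≤ 3 * Real.sqrt ((k:ℝ) * L) := by positivity
    have := mul_self_le_mul_self h3 hr1
    have hss := Real.sq_sqrt hkL
    nlinarith [Real.sq_sqrt hkL, Real.sqrt_nonneg ((k:ℝ)*L)]
  have hexp2 : Real.exp (-(((r:ℝ)^2)/k)) ≤ Real.exp (-(9*L)) := by
    apply Real.exp_le_exp.mpr
    rw [neg_le_neg_iff]
    rw [le_div_iff₀ hk0]
    nlinarith
  -- step 3 : identities
  have hlog2 : (0:ℝ) < Real.log 2 := Real.log_pos one_lt_two
  have h2L : (2:ℝ) ^ (9 * L) = (n:ℝ) ^ (9:ℝ) := by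
    rw [Real.rpow_def_of_pos two_pos, Real.rpow_def_of_pos hn0]
    congr 1
    rw [hL, Real.logb]
    field_simp
  have hexpL : Real.exp (-(9*L)) = (n:ℝ) ^ (-(9/Real.log 2)) := by
    rw [Real.rpow_def_of_pos hn0]
    congr 1
    rw [hL, Real.logb, div_eq_mul_inv, div_eq_mul_inv]
    ring
  have hnn : (n:ℝ) * n = (n:ℝ) ^ (2:ℝ) := by
    rw [show (2:ℝ) = ((2:ℕ):ℝ) by norm_num, Real.rpow_natCast]
    ring
  calc (n:ℝ) * n * ((2:ℝ) ^ (9 * L) * (1 - 1/(2*(k:ℝ))) ^ (2*r^2))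
      ≤ (n:ℝ) * n * ((2:ℝ) ^ (9 * L) * Real.exp (-(9*L))) := by
        have h2pos : (0:ℝ) < (2:ℝ) ^ (9 * L) := Real.rpow_pos_of_pos two_pos _
        have := hpow.trans hexp2
        have hnnpos : (0:ℝ) ≤ (n:ℝ) * n := by positivity
        apply mul_le_mul_of_nonneg_left _ hnnpos
        exact mul_le_mul_of_nonneg_left this (le_of_lt h2pos)
    _ = (n:ℝ) ^ ((2:ℝ) + ((9:ℝ) + -(9/Real.log 2))) := by
        rw [h2L, hexpL, hnn, ← Real.rpow_add hn0, ← Real.rpow_add hn0]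
    _ ≤ (n:ℝ) ^ (-(1.24:ℝ)) := by
        apply Real.rpow_le_rpow_of_exponent_le hn1
        have h9 : (12.24:ℝ) * Real.log 2 < 9 := by
          nlinarith [Real.log_two_lt_d9]
        have h12 : (12.24:ℝ) ≤ 9 / Real.log 2 := by
          rw [le_div_iff₀ hlog2]; linarith
        linarith

/-- for `n ≥ 2`, `k ≥ 1` and `3·√(k·log₂ n) ≤ r` with `2r < n`, with
probability at least `1 − n^{−1.24}` every ball of radius `r` in the torus contains at
least `9·log₂ n` highway nodes. -/
theorem statement9 (n k : ℕ) (hn : 2 ≤ n) (hk : 1 ≤ k) (r : ℕ)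
    (hr1 : 3 * Real.sqrt (k * Real.logb 2 n) ≤ r) (hr2 : 2 * r < n) :
    highwayMeasure n k hk
      {ω | ∀ u : Fin n × Fin n,
        9 * Real.logb 2 n ≤
          ((univ.filter fun v => torusDist n u v ≤ r ∧ ω v = true).card : ℝ)} ≥
      ENNReal.ofReal (1 - (n : ℝ) ^ (-(1.24 : ℝ))) := by
  classical
  have hn0 : 0 < n := by omega
  have hμ : highwayMeasure n k hk = Measure.pi (fun _ : Fin n × Fin n => bern k hk) := rfl
  set μ := highwayMeasure n k hk with hμdef
  haveI : IsProbabilityMeasure μ := by rw [hμ]; infer_instance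
  set a : ℝ := 9 * Real.logb 2 n with ha
  have hL0 : 0 ≤ Real.logb 2 n := by
    apply Real.logb_nonneg one_lt_two
    exact_mod_cast Nat.one_le_of_lt hn
  have ha0 : 0 ≤ a := by positivity
  set q : ℝ≥0∞ := ENNReal.ofReal (1 - 1/(2*(k:ℝ))) with hq
  set E : Set ((Fin n × Fin n) → Bool) :=
    {ω | ∀ u : Fin n × Fin n,
      a ≤ ((univ.filter fun v => torusDist n u v ≤ r ∧ ω v = true).card : ℝ)} with hE
  set bad : (Fin n × Fin n) → Set ((Fin n × Fin n) → Bool) := fun u =>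
    {ω | ((univ.filter fun v => torusDist n u v ≤ r ∧ ω v = true).card : ℝ) < a} with hbad
  have hcover : (Set.univ : Set ((Fin n × Fin n) → Bool)) ⊆ E ∪ ⋃ u, bad u := by
    intro ω _
    by_cases hω : ω ∈ E
    · exact Or.inl hω
    · right
      simp only [hE, Set.mem_setOf_eq, not_forall, not_le] at hω
      obtain ⟨u, hu⟩ := hω
      exact Set.mem_iUnion.mpr ⟨u, hu⟩
  -- bound on each bad u
  have hone : ∀ u : Fin n × Fin n, μ (bad u) ≤ (2:ℝ≥0∞) ^ a * q ^ (2 * r ^ 2) := by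
    intro u
    have h1 : μ (bad u) ≤ (2:ℝ≥0∞) ^ a
        * q ^ (univ.filter fun v => torusDist n u v ≤ r).card := by
      rw [hμ]
      exact chernoff_ball hk (fun v => torusDist n u v ≤ r) a ha0
    refine h1.trans (mul_le_mul_right ?_ _)
    apply pow_le_pow_of_le_one (zero_le (a := q))
      (ENNReal.ofReal_le_one.mpr (by
        have hk1 : (1:ℝ) ≤ k := by exact_mod_cast hk
        have : (0:ℝ) < 2 * k := by linarith
        have : 0 ≤ 1/(2*(k:ℝ)) := by positivity
        linarith))
    exact ball_card_ge hr2 hn0 u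
  -- union bound
  have hbadbd : μ (⋃ u, bad u) ≤ ENNReal.ofReal ((n:ℝ) ^ (-(1.24:ℝ))) := by
    calc μ (⋃ u, bad u) ≤ ∑' u, μ (bad u) := measure_iUnion_le bad
      _ = ∑ u : Fin n × Fin n, μ (bad u) := tsum_fintype _
      _ ≤ ∑ _u : Fin n × Fin n, (2:ℝ≥0∞) ^ a * q ^ (2 * r ^ 2) :=
          Finset.sum_le_sum fun u _ => hone u
      _ = (Fintype.card (Fin n × Fin n)) • ((2:ℝ≥0∞) ^ a * q ^ (2 * r ^ 2)) := by
          rw [Finset.sum_const, Finset.card_univ]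
      _ = ((n * n : ℕ) : ℝ≥0∞) * ((2:ℝ≥0∞) ^ a * q ^ (2 * r ^ 2)) := by
          rw [nsmul_eq_mul, Fintype.card_prod, Fintype.card_fin]
      _ = ENNReal.ofReal ((n:ℝ) * n * ((2:ℝ) ^ a * (1 - 1/(2*(k:ℝ))) ^ (2 * r ^ 2))) := by
          have hx0 : (0:ℝ) ≤ 1 - 1/(2*(k:ℝ)) := by
            have hk1 : (1:ℝ) ≤ k := by exact_mod_cast hk
            have h2 : 1/(2*(k:ℝ)) ≤ 1/2 := by
              rw [div_le_div_iff₀ (by positivity) (by norm_num)]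
              nlinarith
            linarith
          have h2a : (2:ℝ≥0∞) ^ a = ENNReal.ofReal ((2:ℝ) ^ a) := by
            rw [← ENNReal.ofReal_rpow_of_pos two_pos, ENNReal.ofReal_ofNat]
          rw [h2a, hq, ← ENNReal.ofReal_pow hx0, ← ENNReal.ofReal_mul (by positivity),
            ← ENNReal.ofReal_natCast (n * n), ← ENNReal.ofReal_mul (by positivity)]
          congr 1
          push_cast
          ring
      _ ≤ ENNReal.ofReal ((n:ℝ) ^ (-(1.24:ℝ))) :=
          ENNReal.ofReal_le_ofReal (real_final n k r hn hk hr1)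
  -- conclude
  have hEbad : (1:ℝ≥0∞) ≤ μ (⋃ u, bad u) + μ E := by
    calc (1:ℝ≥0∞) = μ Set.univ := (measure_univ (μ := μ)).symm
      _ ≤ μ (E ∪ ⋃ u, bad u) := measure_mono hcover
      _ ≤ μ E + μ (⋃ u, bad u) := measure_union_le _ _
      _ = μ (⋃ u, bad u) + μ E := add_comm _ _
  have ht0 : (0:ℝ) ≤ (n:ℝ) ^ (-(1.24:ℝ)) := Real.rpow_nonneg (by positivity) _
  calc ENNReal.ofReal (1 - (n : ℝ) ^ (-(1.24 : ℝ)))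
      = 1 - ENNReal.ofReal ((n:ℝ) ^ (-(1.24:ℝ))) := by
        rw [ENNReal.ofReal_sub _ ht0, ENNReal.ofReal_one]
    _ ≤ 1 - μ (⋃ u, bad u) := tsub_le_tsub_left hbadbd 1
    _ ≤ μ E := tsub_le_iff_left.mpr hEbad
end

section
/- Let n ≥ 2 and k ≥ 1 be integers, and let r be an integer with 3 ≤ r ≤ 3·√(k·log₂ n). Let each of the n² vertices of the n×n torus grid be included in a random set H independently with probability 1/k. Then with probability at least 1 − n^{−1.89}, every vertex u of the torus satisfies |B_r(u) ∩ H| < 41·log₂ n. -/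
open Finset MeasureTheory
open scoped ENNReal NNReal

/-! ### Auxiliary geometric lemmas -/

private def signedRep (n d : ℕ) : ℤ := if 2 * d ≤ n then (d : ℤ) else (d : ℤ) - n

private lemma signedRep_inj {n d₁ d₂ : ℕ} (h₁ : d₁ < n) (h₂ : d₂ < n)
    (h : signedRep n d₁ = signedRep n d₂) : d₁ = d₂ := by
  unfold signedRep at h; split_ifs at h <;> omega

private lemma signedRep_natAbs {n d : ℕ} (h : d < n) :
    (signedRep n d).natAbs = min d (n - d) := by
  unfold signedRep; split_ifs <;> omega

private lemma mod_sub_inj {n a x y : ℕ} (hx : x < n) (hy : y < n)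
    (h : (a + n - x) % n = (a + n - y) % n) : x = y := by
  have hx' : x ≤ a + n := by omega
  have hy' : y ≤ a + n := by omega
  have hz : (((a + n - x) % n : ℕ) : ℤ) = (((a + n - y) % n : ℕ) : ℤ) := by exact_mod_cast h
  push_cast [Nat.cast_sub hx', Nat.cast_sub hy'] at hz
  have h1 : Int.ModEq n ((a:ℤ) + n - x) ((a:ℤ) + n - y) := hz
  have h2 : Int.ModEq n ((a:ℤ) + n - ((a:ℤ) + n - x)) ((a:ℤ) + n - ((a:ℤ) + n - y)) :=
    (Int.ModEq.refl ((a:ℤ) + n)).sub h1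
  simp only [sub_sub_cancel] at h2
  have h3 : (x : ℤ) % n = (y : ℤ) % n := h2
  rw [Int.emod_eq_of_lt (by positivity) (by exact_mod_cast hx),
      Int.emod_eq_of_lt (by positivity) (by exact_mod_cast hy)] at h3
  exact_mod_cast h3

private lemma sum_abs_Icc (r : ℕ) : ∑ a ∈ Finset.Icc (-(r:ℤ)) r, |a| = r * (r+1) := by
  induction r with
  | zero => simp
  | succ m ih =>
    have hset : Finset.Icc (-((m:ℤ)+1)) ((m:ℤ)+1)
        = insert (-((m:ℤ)+1)) (insert ((m:ℤ)+1) (Finset.Icc (-(m:ℤ)) m)) := by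
      ext a; simp only [Finset.mem_Icc, Finset.mem_insert]; omega
    push_cast [hset]
    rw [Finset.sum_insert (by simp only [Finset.mem_insert, Finset.mem_Icc]; omega),
        Finset.sum_insert (by simp only [Finset.mem_Icc]; omega), ih]
    rw [abs_of_nonpos (show -((m:ℤ)+1) ≤ 0 by omega), abs_of_nonneg (show (0:ℤ) ≤ (m:ℤ)+1 by omega)]
    ring

private lemma ball_card_le (n r : ℕ) (hn : 1 ≤ n) (u : Fin n × Fin n) :
    (univ.filter fun v : Fin n × Fin n => torusDist n u v ≤ r).card
      ≤ 2 * r ^ 2 + 2 * r + 1 := by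
  classical
  unfold torusDist
  set T : Finset ((_ : ℤ) × ℤ) :=
    (Finset.Icc (-(r:ℤ)) r).sigma (fun a => Finset.Icc (-((r:ℤ) - |a|)) ((r:ℤ) - |a|)) with hT
  have hcard : T.card = 2 * r ^ 2 + 2 * r + 1 := by
    rw [hT, Finset.card_sigma]
    have hterm : ∀ a ∈ Finset.Icc (-(r:ℤ)) r,
        ((Finset.Icc (-((r:ℤ) - |a|)) ((r:ℤ) - |a|)).card : ℤ) = 2 * ((r:ℤ) - |a|) + 1 := by
      intro a ha
      rw [Int.card_Icc]
      simp only [Finset.mem_Icc] at ha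
      have : |a| ≤ (r:ℤ) := abs_le.mpr ha
      omega
    have hsum : ((∑ a ∈ Finset.Icc (-(r:ℤ)) r,
        (Finset.Icc (-((r:ℤ) - |a|)) ((r:ℤ) - |a|)).card : ℕ) : ℤ)
        = ∑ a ∈ Finset.Icc (-(r:ℤ)) r, (2 * ((r:ℤ) - |a|) + 1) := by
      push_cast
      exact Finset.sum_congr rfl hterm
    have hc : (Finset.Icc (-(r:ℤ)) r).card = 2 * r + 1 := by
      rw [Int.card_Icc]; omega
    rw [Finset.sum_add_distrib, Finset.sum_const, hc] at hsum
    have habs := sum_abs_Icc r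
    have heval : ∑ a ∈ Finset.Icc (-(r:ℤ)) r, (2 * ((r:ℤ) - |a|)) =
        2 * (((2*(r:ℤ)+1)) * r - r * (r+1)) := by
      rw [← Finset.mul_sum, Finset.sum_sub_distrib, habs, Finset.sum_const, hc]
      push_cast; ring
    rw [heval] at hsum
    simp only [smul_eq_mul, mul_one, nsmul_eq_mul] at hsum
    have hfin : ((∑ a ∈ Finset.Icc (-(r:ℤ)) r,
        (Finset.Icc (-((r:ℤ) - |a|)) ((r:ℤ) - |a|)).card : ℕ) : ℤ)
        = ((2 * r ^ 2 + 2 * r + 1 : ℕ) : ℤ) := by rw [hsum]; push_cast; ring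
    exact_mod_cast hfin
  rw [← hcard]
  apply Finset.card_le_card_of_injOn
    (fun v => ⟨signedRep n ((u.1.val + n - v.1.val) % n),
               signedRep n ((u.2.val + n - v.2.val) % n)⟩)
  · intro v hv
    simp only [Finset.coe_filter, Set.mem_setOf_eq] at hv
    have hdx : (u.1.val + n - v.1.val) % n < n := Nat.mod_lt _ (by omega)
    have hdy : (u.2.val + n - v.2.val) % n < n := Nat.mod_lt _ (by omega)
    have h1 := signedRep_natAbs hdx
    have h2 := signedRep_natAbs hdy
    simp only [hT, Finset.coe_sigma, Set.mem_sigma_iff, Finset.mem_coe, Finset.mem_sigma, Finset.mem_Icc]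
    have habs1 : |signedRep n ((u.1.val + n - v.1.val) % n)|
        = ((signedRep n ((u.1.val + n - v.1.val) % n)).natAbs : ℤ) := (Int.abs_eq_natAbs _)
    have habs2 : |signedRep n ((u.2.val + n - v.2.val) % n)|
        = ((signedRep n ((u.2.val + n - v.2.val) % n)).natAbs : ℤ) := (Int.abs_eq_natAbs _)
    rw [h1] at habs1; rw [h2] at habs2
    constructor
    · constructor <;> [skip; skip] <;>
      · rw [← neg_neg (signedRep n _)] at *
        omega
    · omega
  · intro v hv w hw heq
    have hdxv : (u.1.val + n - v.1.val) % n < n := Nat.mod_lt _ (by omega)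
    have hdxw : (u.1.val + n - w.1.val) % n < n := Nat.mod_lt _ (by omega)
    have hdyv : (u.2.val + n - v.2.val) % n < n := Nat.mod_lt _ (by omega)
    have hdyw : (u.2.val + n - w.2.val) % n < n := Nat.mod_lt _ (by omega)
    obtain ⟨h1, h2⟩ := Sigma.mk.inj_iff.mp heq
    have h2' := eq_of_heq h2
    have e1 := mod_sub_inj v.1.isLt w.1.isLt (signedRep_inj hdxv hdxw h1)
    have e2 := mod_sub_inj v.2.isLt w.2.isLt (signedRep_inj hdyv hdyw h2')
    exact Prod.ext (Fin.ext e1) (Fin.ext e2)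

/-! ### Auxiliary measure-theoretic lemmas -/

private lemma highway_measurableSet {n : ℕ} (s : Set ((Fin n × Fin n) → Bool)) :
    MeasurableSet s :=
  s.to_countable.measurableSet

private lemma highway_singleton (n k : ℕ) (hk : 1 ≤ k) (ω : (Fin n × Fin n) → Bool) :
    highwayMeasure n k hk {ω} =
      ∏ v : Fin n × Fin n, (cond (ω v) (k:ℝ≥0∞)⁻¹ (1 - (k:ℝ≥0∞)⁻¹)) := by
  have hset : ({ω} : Set ((Fin n × Fin n) → Bool))
      = Set.pi Set.univ (fun v => {ω v}) := by
    ext f; simp [Set.mem_pi, funext_iff]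
  rw [highwayMeasure, hset, Measure.pi_pi]
  refine Finset.prod_congr rfl fun v _ => ?_
  rw [PMF.toMeasure_apply_singleton _ _ (measurableSet_singleton _), PMF.bernoulli_apply]
  have hk0 : (k:ℝ≥0) ≠ 0 := by simp; omega
  cases ω v <;> simp [ENNReal.coe_sub, ENNReal.coe_inv hk0]

private lemma highway_lintegral_prod (n k : ℕ) (hk : 1 ≤ k)
    (g : (Fin n × Fin n) → Bool → ℝ≥0∞) :
    ∫⁻ ω, ∏ v, g v (ω v) ∂(highwayMeasure n k hk) =
      ∏ v : Fin n × Fin n,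
        ((k:ℝ≥0∞)⁻¹ * g v true + (1 - (k:ℝ≥0∞)⁻¹) * g v false) := by
  classical
  rw [lintegral_fintype]
  simp_rw [highway_singleton n k hk, ← Finset.prod_mul_distrib]
  have hps := Finset.prod_univ_sum (fun _ : Fin n × Fin n => (Finset.univ : Finset Bool))
    (fun v b => g v b * (cond b (k:ℝ≥0∞)⁻¹ (1 - (k:ℝ≥0∞)⁻¹)))
  rw [Fintype.piFinset_univ] at hps
  rw [← hps]
  refine Finset.prod_congr rfl fun v _ => ?_
  rw [Fintype.sum_bool]
  simp [mul_comm]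

/-! ### Auxiliary real-analytic lemmas -/

private lemma m_bound (n k r m : ℕ) (hn : 2 ≤ n) (hk : 1 ≤ k) (hr1 : 3 ≤ r)
    (hr2 : (r : ℝ) ≤ 3 * Real.sqrt (k * Real.logb 2 n))
    (hm : m ≤ 2 * r ^ 2 + 2 * r + 1) :
    (m : ℝ) ≤ 25 * k * Real.logb 2 n := by
  have hL : (1:ℝ) ≤ Real.logb 2 n := by
    rw [show (1:ℝ) = Real.logb 2 2 by simp]
    exact Real.logb_le_logb_of_le one_lt_two (by norm_num) (by exact_mod_cast hn)
  have hkL : (1:ℝ) ≤ (k:ℝ) * Real.logb 2 n := by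
    have : (1:ℝ) ≤ (k:ℝ) := by exact_mod_cast hk
    nlinarith
  have hs := Real.sq_sqrt (by linarith : (0:ℝ) ≤ (k:ℝ) * Real.logb 2 n)
  have hsnn := Real.sqrt_nonneg ((k:ℝ) * Real.logb 2 n)
  have hsle : Real.sqrt ((k:ℝ) * Real.logb 2 n) ≤ (k:ℝ) * Real.logb 2 n := by
    nlinarith [sq_nonneg (Real.sqrt ((k:ℝ) * Real.logb 2 n) - 1)]
  have hr2' : (r:ℝ)^2 ≤ 9 * ((k:ℝ) * Real.logb 2 n) := by nlinarith
  have hm' : (m:ℝ) ≤ 2 * (r:ℝ)^2 + 2 * r + 1 := by exact_mod_cast hm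
  nlinarith

private lemma real_core (n k : ℕ) (m : ℕ) (hn : 2 ≤ n) (hk : 1 ≤ k)
    (hm : (m:ℝ) ≤ 25 * k * Real.logb 2 n) :
    (1 + 1/(k:ℝ))^m ≤ (n:ℝ) ^ (-(1.89:ℝ)) / (n:ℝ)^2 * 2 ^ (41 * Real.logb 2 n) := by
  have hk0 : (0:ℝ) < k := by exact_mod_cast hk
  have hn0 : (0:ℝ) < n := by positivity
  set N := Real.log n with hN
  set c := Real.log 2 with hc
  have hcpos : (0.6931471803:ℝ) < c := Real.log_two_gt_d9
  have hNpos : 0 < N := Real.log_pos (by exact_mod_cast hn)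
  have hlogb : Real.logb 2 n = N / c := rfl
  have h1 : (1 + 1/(k:ℝ)) ≤ Real.exp (1/k) := by
    have := Real.add_one_le_exp (1/(k:ℝ)); linarith
  have h2 : (1 + 1/(k:ℝ))^m ≤ Real.exp (1/k) ^ m := by
    apply pow_le_pow_left₀ (by positivity) h1
  have h3 : Real.exp (1/(k:ℝ)) ^ m = Real.exp (m / k) := by
    rw [← Real.exp_nat_mul]; ring_nf
  have h4 : (m:ℝ)/k ≤ 25 * (N / c) := by
    rw [hlogb] at hm
    rw [div_le_iff₀ hk0]
    calc (m:ℝ) ≤ 25 * k * (N/c) := hm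
    _ = 25 * (N/c) * k := by ring
  have hLHS : (1 + 1/(k:ℝ))^m ≤ Real.exp (25 * (N/c)) := by
    calc (1 + 1/(k:ℝ))^m ≤ Real.exp (m/k) := h3 ▸ h2
    _ ≤ _ := Real.exp_le_exp.mpr h4
  have hcne : c ≠ 0 := by linarith
  have hRHS : (n:ℝ) ^ (-(1.89:ℝ)) / (n:ℝ)^2 * 2 ^ (41 * Real.logb 2 n)
      = Real.exp ((41 - 3.89) * N) := by
    rw [Real.rpow_def_of_pos hn0, Real.rpow_def_of_pos (by norm_num : (0:ℝ) < 2), hlogb,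
      ← hN, ← hc]
    have hnexp : (n:ℝ) = Real.exp N := (Real.exp_log hn0).symm
    rw [hnexp]
    have hp2 : Real.exp N ^ 2 = Real.exp (2 * N) := by
      rw [← Real.exp_nat_mul]; norm_num
    have hce : c * (41 * (N / c)) = 41 * N := by field_simp
    rw [hp2, hce, ← Real.exp_sub, ← Real.exp_add]
    congr 1; ring
  rw [hRHS]
  refine hLHS.trans (Real.exp_le_exp.mpr ?_)
  rw [mul_div_assoc'] at *
  rw [div_le_iff₀ (by linarith : (0:ℝ) < c)]
  nlinarith

/-! ### The main theorem -/

/-- for `n ≥ 2`, `k ≥ 1` and `3 ≤ r ≤ 3·√(k·log₂ n)`, with probability at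
least `1 − n^{−1.89}` every ball of radius `r` in the torus contains fewer than
`41·log₂ n` highway nodes. -/
theorem statement10 (n k : ℕ) (hn : 2 ≤ n) (hk : 1 ≤ k) (r : ℕ)
    (hr1 : 3 ≤ r) (hr2 : (r : ℝ) ≤ 3 * Real.sqrt (k * Real.logb 2 n)) :
    highwayMeasure n k hk
      {ω | ∀ u : Fin n × Fin n,
        ((univ.filter fun v => torusDist n u v ≤ r ∧ ω v = true).card : ℝ) <
          41 * Real.logb 2 n} ≥
      ENNReal.ofReal (1 - (n : ℝ) ^ (-(1.89 : ℝ))) := by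
  classical
  have hn0 : (0:ℝ) < n := by positivity
  set μ := highwayMeasure n k hk with hμ
  have hprob : IsProbabilityMeasure μ := by rw [hμ, highwayMeasure]; infer_instance
  set p : ℝ≥0∞ := (k:ℝ≥0∞)⁻¹ with hp
  have hp1 : p ≤ 1 := ENNReal.inv_le_one.mpr (by exact_mod_cast hk)
  set L := Real.logb 2 n with hL
  set q : ℝ≥0∞ := ENNReal.ofReal ((n:ℝ) ^ (-(1.89:ℝ)) / (n:ℝ)^2) with hq
  -- the per-vertex tail bound
  have key : ∀ u : Fin n × Fin n,
      μ {ω | ¬ (((univ.filter fun v => torusDist n u v ≤ r ∧ ω v = true).card : ℝ) < 41 * L)}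
        ≤ q := by
    intro u
    set g : (Fin n × Fin n) → Bool → ℝ≥0∞ :=
      fun v b => if torusDist n u v ≤ r ∧ b = true then (2:ℝ≥0∞) else 1 with hg
    set f : ((Fin n × Fin n) → Bool) → ℝ≥0∞ := fun ω => ∏ v, g v (ω v) with hf
    have hfeq : ∀ ω, f ω =
        (2:ℝ≥0∞) ^ (univ.filter fun v => torusDist n u v ≤ r ∧ ω v = true).card := by
      intro ω
      simp only [hf, hg]
      rw [← Finset.prod_filter, Finset.prod_const]
    set ε : ℝ≥0∞ := ENNReal.ofReal ((2:ℝ) ^ (41 * L)) with hε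
    have hεpos : (0:ℝ) < (2:ℝ) ^ (41 * L) := Real.rpow_pos_of_pos (by norm_num) _
    have hεne : ε ≠ 0 := by
      rw [hε]; exact (ENNReal.ofReal_pos.mpr hεpos).ne'
    have hεtop : ε ≠ ⊤ := ENNReal.ofReal_ne_top
    -- tail set is contained in the Markov set
    have hsub : {ω | ¬ (((univ.filter fun v => torusDist n u v ≤ r ∧ ω v = true).card : ℝ)
          < 41 * L)} ⊆ {ω | ε ≤ f ω} := by
      intro ω hω
      simp only [Set.mem_setOf_eq, not_lt] at hω ⊢
      rw [hfeq ω]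
      have h2 : (2:ℝ≥0∞) ^ (univ.filter fun v => torusDist n u v ≤ r ∧ ω v = true).card
          = ENNReal.ofReal ((2:ℝ) ^ (univ.filter fun v => torusDist n u v ≤ r ∧ ω v = true).card) := by
        rw [ENNReal.ofReal_pow (by norm_num)]
        norm_num
      rw [h2, hε]
      apply ENNReal.ofReal_le_ofReal
      rw [← Real.rpow_natCast 2 _]
      exact Real.rpow_le_rpow_of_exponent_le one_le_two hω
    -- Markov
    have hmeas : Measurable f := fun s _ => highway_measurableSet _
    have hmarkov := mul_meas_ge_le_lintegral (μ := μ) hmeas ε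
    -- compute the MGF
    have hmgf : ∫⁻ ω, f ω ∂μ
        = (1 + p) ^ (univ.filter fun v => torusDist n u v ≤ r).card := by
      rw [hf, hμ]
      rw [highway_lintegral_prod n k hk g]
      simp only [hg]
      have hfactor : ∀ v : Fin n × Fin n,
          p * g v true + (1 - p) * g v false
            = if torusDist n u v ≤ r then 1 + p else 1 := by
        intro v
        by_cases h : torusDist n u v ≤ r
        · simp only [hg, h, and_true, true_and, if_true, Bool.true_eq, Bool.false_eq_true,
            and_false, if_false, mul_one]
          rw [mul_two, add_assoc, add_tsub_cancel_of_le hp1, add_comm]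
        · simp only [hg, h, false_and, if_false, mul_one]
          exact add_tsub_cancel_of_le hp1
      have : ∀ v : Fin n × Fin n, (k:ℝ≥0∞)⁻¹ * g v true + (1 - (k:ℝ≥0∞)⁻¹) * g v false
          = if torusDist n u v ≤ r then 1 + p else 1 := hfactor
      simp only [hg] at this
      simp_rw [this]
      rw [← Finset.prod_filter, Finset.prod_const]
    have hball := ball_card_le n r (by omega) u
    -- bound the MGF by an explicit real quantity
    have hmgf_le : ∫⁻ ω, f ω ∂μ ≤ q * ε := by
      rw [hmgf]
      have hpeq : (1:ℝ≥0∞) + p = ENNReal.ofReal (1 + 1/(k:ℝ)) := by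
        rw [hp, ENNReal.ofReal_add (by norm_num) (by positivity), ENNReal.ofReal_one,
          one_div, ENNReal.ofReal_inv_of_pos (by exact_mod_cast hk), ENNReal.ofReal_natCast]
      rw [hpeq, ← ENNReal.ofReal_pow (by positivity), hq, hε, ← ENNReal.ofReal_mul (by positivity)]
      apply ENNReal.ofReal_le_ofReal
      exact real_core n k _ hn hk (m_bound n k r _ hn hk hr1 hr2 hball)
    -- put it together
    calc μ _ ≤ μ {ω | ε ≤ f ω} := measure_mono hsub
    _ ≤ (∫⁻ ω, f ω ∂μ) / ε := by
        rw [ENNReal.le_div_iff_mul_le (Or.inl hεne) (Or.inl hεtop), mul_comm]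
        exact hmarkov
    _ ≤ (q * ε) / ε := by gcongr
    _ = q := by rw [mul_div_assoc, ENNReal.div_self hεne hεtop, mul_one]
  -- union bound
  set G : Set ((Fin n × Fin n) → Bool) :=
    {ω | ∀ u : Fin n × Fin n,
        ((univ.filter fun v => torusDist n u v ≤ r ∧ ω v = true).card : ℝ) < 41 * L} with hG
  have hGc : Gᶜ ⊆ ⋃ u : Fin n × Fin n,
      {ω | ¬ (((univ.filter fun v => torusDist n u v ≤ r ∧ ω v = true).card : ℝ) < 41 * L)} := by
    intro ω hω
    simp only [hG, Set.mem_compl_iff, Set.mem_setOf_eq, not_forall] at hω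
    obtain ⟨u, hu⟩ := hω
    exact Set.mem_iUnion.mpr ⟨u, hu⟩
  have hbad : μ Gᶜ ≤ ENNReal.ofReal ((n:ℝ) ^ (-(1.89:ℝ))) := by
    calc μ Gᶜ ≤ μ (⋃ u : Fin n × Fin n,
        {ω | ¬ (((univ.filter fun v => torusDist n u v ≤ r ∧ ω v = true).card : ℝ) < 41 * L)}) :=
        measure_mono hGc
    _ ≤ ∑' u : Fin n × Fin n, μ {ω | ¬ (((univ.filter fun v => torusDist n u v ≤ r ∧ ω v = true).card : ℝ) < 41 * L)} :=
        measure_iUnion_le _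
    _ = ∑ u : Fin n × Fin n, μ {ω | ¬ (((univ.filter fun v => torusDist n u v ≤ r ∧ ω v = true).card : ℝ) < 41 * L)} :=
        tsum_fintype _
    _ ≤ (Finset.univ : Finset (Fin n × Fin n)).card • q :=
        Finset.sum_le_card_nsmul _ _ _ (fun u _ => key u)
    _ = ((n * n : ℕ) : ℝ≥0∞) * q := by
        rw [nsmul_eq_mul]
        norm_num [Fintype.card_prod]
    _ = ENNReal.ofReal ((n:ℝ) ^ (-(1.89:ℝ))) := by
        rw [hq, show ((n * n : ℕ) : ℝ≥0∞) = ENNReal.ofReal ((n:ℝ) * n) by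
          rw [← ENNReal.ofReal_natCast]; push_cast; ring_nf]
        rw [← ENNReal.ofReal_mul (by positivity)]
        congr 1
        field_simp
  have hGmeas : MeasurableSet Gᶜ := highway_measurableSet _
  have hcompl : μ G = 1 - μ Gᶜ := by
    have h := prob_compl_eq_one_sub (μ := μ) hGmeas
    rwa [compl_compl] at h
  have hofr : ENNReal.ofReal (1 - (n : ℝ) ^ (-(1.89 : ℝ)))
      = 1 - ENNReal.ofReal ((n:ℝ) ^ (-(1.89:ℝ))) := by
    rw [ENNReal.ofReal_sub _ (by positivity), ENNReal.ofReal_one]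
  show μ G ≥ _
  rw [hcompl, hofr]
  exact tsub_le_tsub_left hbad 1
end

section
/- Let n ≥ 3 and k ≥ 1 be integers, and let r be an integer with 3 ≤ r ≤ 3·√(k·log₂(log₂ n)). Let each of the n² vertices of the n×n torus grid be included in a random set H independently with probability 1/k. Then for any fixed vertex u of the torus, with probability at least 1 − (log₂ n)^{−3.89}, we have |B_r(u) ∩ H| < 41·log₂(log₂ n). -/
open Finset MeasureTheory
open scoped ENNReal NNReal

lemma tg_mod_inj (n u x y : ℕ) (hx : x < n) (hy : y < n) (hu : u < n)
    (h : (u + n - x) % n = (u + n - y) % n) : x = y := by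
  have e : ∀ z, z < n → (u + n - z) % n = if z ≤ u then u - z else u + n - z := by
    intro z hz
    rcases le_or_gt z u with h1 | h1
    · have : u + n - z = (u - z) + n := by omega
      rw [this, Nat.add_mod_right, Nat.mod_eq_of_lt (by omega)]
      simp [h1]
    · rw [Nat.mod_eq_of_lt (by omega)]
      have : ¬ z ≤ u := by omega
      simp [this]
  rw [e x hx, e y hy] at h
  split_ifs at h <;> omega

lemma tg_sum_sq : ∀ m : ℕ, ∑ i ∈ range m, (2 * (2 * i + 1)) = 2 * m ^ 2 := by
  intro m
  induction m with
  | zero => simp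
  | succ m ih => rw [Finset.sum_range_succ, ih]; ring

lemma tg_sum_aux (r : ℕ) :
    ∑ j ∈ range (r + 1), (if j = 0 then 1 else 2) * (2 * (r - j) + 1) = 2 * r ^ 2 + 2 * r + 1 := by
  rw [Finset.sum_range_succ']
  simp only [Nat.succ_ne_zero, if_false, if_pos rfl]
  have h1 : ∀ i, 2 * (r - (i + 1)) + 1 = 2 * (r - 1 - i) + 1 := by intro i; omega
  have h2 : ∑ i ∈ range r, 2 * (2 * (r - 1 - i) + 1) = ∑ i ∈ range r, 2 * (2 * i + 1) :=
    Finset.sum_range_reflect (fun i => 2 * (2 * i + 1)) r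
  calc ∑ i ∈ range r, 2 * (2 * (r - (i + 1)) + 1) + 1 * (2 * (r - 0) + 1)
      = ∑ i ∈ range r, 2 * (2 * (r - 1 - i) + 1) + (2 * r + 1) := by
        simp only [h1]; omega
    _ = 2 * r ^ 2 + (2 * r + 1) := by rw [h2, tg_sum_sq]
    _ = 2 * r ^ 2 + 2 * r + 1 := by omega

lemma tg_ball_card (n r : ℕ) (hn : 0 < n) (u : Fin n × Fin n) :
    (univ.filter fun v : Fin n × Fin n => torusDist n u v ≤ r).card ≤ 2 * r ^ 2 + 2 * r + 1 := by
  classical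
  set ax : Fin n × Fin n → ℕ := fun v => (u.1.val + n - v.1.val) % n with hax
  set ay : Fin n × Fin n → ℕ := fun v => (u.2.val + n - v.2.val) % n with hay
  have haxlt : ∀ v, ax v < n := fun v => Nat.mod_lt _ hn
  have haylt : ∀ v, ay v < n := fun v => Nat.mod_lt _ hn
  have hdist : ∀ v, torusDist n u v = min (ax v) (n - ax v) + min (ay v) (n - ay v) := by
    intro v; rfl
  set B := univ.filter fun v : Fin n × Fin n => torusDist n u v ≤ r with hB
  have hg : ∀ v ∈ B, min (ax v) (n - ax v) ∈ range (r + 1) := by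
    intro v hv
    rw [hB, Finset.mem_filter, hdist v] at hv
    rw [Finset.mem_range]
    omega
  rw [Finset.card_eq_sum_card_fiberwise hg]
  have hfib : ∀ j ∈ range (r + 1),
      (B.filter fun v => min (ax v) (n - ax v) = j).card
        ≤ (if j = 0 then 1 else 2) * (2 * (r - j) + 1) := by
    intro j hj
    set Fx : Finset ℕ := if j = 0 then {0} else {j, n - j} with hFx
    set Fy : Finset ℕ := range (r - j + 1) ∪ Icc (n - (r - j)) (n - 1) with hFy
    have hsub : (B.filter fun v => min (ax v) (n - ax v) = j).card ≤ (Fx ×ˢ Fy).card := by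
      apply Finset.card_le_card_of_injOn (fun v => (ax v, ay v))
      · intro v hv
        rw [Finset.mem_coe, Finset.mem_filter, hB, Finset.mem_filter, hdist v] at hv
        obtain ⟨⟨-, hle⟩, hj'⟩ := hv
        have h1 := haxlt v; have h2 := haylt v
        rw [Finset.mem_coe, Finset.mem_product]
        constructor
        · rw [hFx]
          split_ifs with h0
          · simp only [Finset.mem_singleton]; omega
          · simp only [Finset.mem_insert, Finset.mem_singleton]; omega
        · rw [hFy]
          simp only [Finset.mem_union, Finset.mem_range, Finset.mem_Icc]
          omega
      · intro v hv w hw hvw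
        simp only [Prod.mk.injEq] at hvw
        have e1 : v.1.val = w.1.val :=
          tg_mod_inj n u.1.val v.1.val w.1.val v.1.isLt w.1.isLt u.1.isLt hvw.1
        have e2 : v.2.val = w.2.val :=
          tg_mod_inj n u.2.val v.2.val w.2.val v.2.isLt w.2.isLt u.2.isLt hvw.2
        exact Prod.ext (Fin.ext e1) (Fin.ext e2)
    refine hsub.trans ?_
    rw [Finset.card_product]
    have hx : Fx.card ≤ (if j = 0 then 1 else 2) := by
      rw [hFx]; split_ifs
      · simp
      · exact (Finset.card_insert_le _ _).trans (by simp)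
    have hy : Fy.card ≤ 2 * (r - j) + 1 := by
      rw [hFy]
      refine (Finset.card_union_le _ _).trans ?_
      rw [Finset.card_range, Nat.card_Icc]
      omega
    exact Nat.mul_le_mul hx hy
  calc ∑ j ∈ range (r + 1), (B.filter fun v => min (ax v) (n - ax v) = j).card
      ≤ ∑ j ∈ range (r + 1), (if j = 0 then 1 else 2) * (2 * (r - j) + 1) :=
        Finset.sum_le_sum hfib
    _ = 2 * r ^ 2 + 2 * r + 1 := tg_sum_aux r


lemma tg_measSingleton {ι : Type*} [Fintype ι] (ω : ι → Bool) :
    MeasurableSet ({ω} : Set (ι → Bool)) := by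
  have : ({ω} : Set (ι → Bool)) = ⋂ v, (fun f : ι → Bool => f v) ⁻¹' {ω v} := by
    ext f; simp [funext_iff]
  rw [this]
  exact MeasurableSet.iInter fun v => (measurable_pi_apply v) (measurableSet_singleton _)

lemma tg_lintegral (n k : ℕ) (hk : 1 ≤ k) (g : (Fin n × Fin n) → Bool → ℝ≥0∞) :
    ∫⁻ ω, ∏ v, g v (ω v) ∂(highwayMeasure n k hk) =
      ∏ v, (g v true * (k : ℝ≥0∞)⁻¹ + g v false * (1 - (k : ℝ≥0∞)⁻¹)) := by
  classical
  haveI : MeasurableSingletonClass ((Fin n × Fin n) → Bool) := ⟨tg_measSingleton⟩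
  rw [lintegral_fintype]
  have hsingle : ∀ ω : (Fin n × Fin n) → Bool,
      highwayMeasure n k hk {ω}
        = ∏ v, (PMF.bernoulli (k : ℝ≥0)⁻¹
            (inv_le_one_of_one_le₀ (by exact_mod_cast hk))).toMeasure {ω v} := by
    intro ω
    have : ({ω} : Set ((Fin n × Fin n) → Bool)) = Set.pi Set.univ (fun v => {ω v}) := by
      ext f; simp [Set.mem_pi, funext_iff]
    rw [highwayMeasure, this, Measure.pi_pi]
  have hbern : ∀ b : Bool,
      (PMF.bernoulli (k : ℝ≥0)⁻¹
        (inv_le_one_of_one_le₀ (by exact_mod_cast hk))).toMeasure {b}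
        = cond b (k : ℝ≥0∞)⁻¹ (1 - (k : ℝ≥0∞)⁻¹) := by
    intro b
    rw [PMF.toMeasure_apply_singleton _ b (measurableSet_singleton b), PMF.bernoulli_apply]
    cases b <;> simp [ENNReal.coe_inv (Nat.cast_ne_zero.mpr (by omega : k ≠ 0)), ENNReal.coe_sub]
  calc ∑ ω : (Fin n × Fin n) → Bool, (∏ v, g v (ω v)) * highwayMeasure n k hk {ω}
      = ∑ ω : (Fin n × Fin n) → Bool,
          ∏ v, (g v (ω v) * cond (ω v) (k : ℝ≥0∞)⁻¹ (1 - (k : ℝ≥0∞)⁻¹)) := by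
        refine Finset.sum_congr rfl fun ω _ => ?_
        rw [hsingle ω, ← Finset.prod_mul_distrib]
        refine Finset.prod_congr rfl fun v _ => by rw [hbern]
    _ = ∏ v, ∑ b ∈ (univ : Finset Bool), (g v b * cond b (k : ℝ≥0∞)⁻¹ (1 - (k : ℝ≥0∞)⁻¹)) := by
        rw [Finset.prod_univ_sum (fun _ => (univ : Finset Bool))
          (fun v b => g v b * cond b (k : ℝ≥0∞)⁻¹ (1 - (k : ℝ≥0∞)⁻¹)), Fintype.piFinset_univ]
    _ = ∏ v, (g v true * (k : ℝ≥0∞)⁻¹ + g v false * (1 - (k : ℝ≥0∞)⁻¹)) := by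
        refine Finset.prod_congr rfl fun v _ => ?_
        rw [Fintype.sum_bool]
        rfl

lemma tg_measAll {ι : Type*} [Fintype ι] (s : Set (ι → Bool)) : MeasurableSet s := by
  classical
  rw [← Set.biUnion_of_singleton s]
  exact MeasurableSet.biUnion (Set.to_countable s) fun ω _ => tg_measSingleton ω

set_option maxHeartbeats 1000000 in
/-- for `n ≥ 3`, `k ≥ 1` and `3 ≤ r ≤ 3·√(k·log₂ log₂ n)`, for any fixed
vertex `u`, with probability at least `1 − (log₂ n)^{−3.89}` the ball of radius `r`
around `u` contains fewer than `41·log₂ log₂ n` highway nodes. -/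
theorem statement11 (n k : ℕ) (hn : 3 ≤ n) (hk : 1 ≤ k) (r : ℕ)
    (hr1 : 3 ≤ r) (hr2 : (r : ℝ) ≤ 3 * Real.sqrt (k * Real.logb 2 (Real.logb 2 n)))
    (u : Fin n × Fin n) :
    highwayMeasure n k hk
      {ω | ((univ.filter fun v => torusDist n u v ≤ r ∧ ω v = true).card : ℝ) <
          41 * Real.logb 2 (Real.logb 2 n)} ≥
      ENNReal.ofReal (1 - (Real.logb 2 n) ^ (-(3.89 : ℝ))) := by
  classical
  have hkR : (0:ℝ) < k := by exact_mod_cast hk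
  set L := Real.logb 2 (Real.logb 2 n) with hLdef
  have hlogn : 1 < Real.logb 2 n := by
    have h2n : (2:ℝ) < n := by exact_mod_cast (by omega : 2 < n)
    have h22 : Real.logb 2 2 = 1 := by simp
    calc (1:ℝ) = Real.logb 2 2 := h22.symm
      _ < Real.logb 2 n := Real.logb_lt_logb (by norm_num) (by norm_num) h2n
  have hlogn0 : 0 < Real.logb 2 n := lt_trans one_pos hlogn
  have hLpos : 0 < L := Real.logb_pos (by norm_num) hlogn
  set εr : ℝ := (Real.logb 2 n) ^ (-(3.89 : ℝ)) with hεrdef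
  have hεr0 : 0 ≤ εr := Real.rpow_nonneg (le_of_lt hlogn0) _
  set P := highwayMeasure n k hk with hPdef
  haveI : IsProbabilityMeasure P := by rw [hPdef, highwayMeasure]; infer_instance
  set X : ((Fin n × Fin n) → Bool) → ℕ :=
    fun ω => (univ.filter fun v => torusDist n u v ≤ r ∧ ω v = true).card with hXdef
  set bad : Set ((Fin n × Fin n) → Bool) := {ω | 41 * L ≤ (X ω : ℝ)} with hbaddef
  suffices hbad : P bad ≤ ENNReal.ofReal εr by
    have hcover : (Set.univ : Set ((Fin n × Fin n) → Bool)) ⊆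
        {ω | ((univ.filter fun v => torusDist n u v ≤ r ∧ ω v = true).card : ℝ) < 41 * L}
          ∪ bad := by
      intro ω _
      rcases lt_or_ge ((X ω : ℝ)) (41 * L) with h | h
      · exact Or.inl h
      · exact Or.inr h
    have h1 : (1 : ℝ≥0∞) ≤
        P {ω | ((univ.filter fun v => torusDist n u v ≤ r ∧ ω v = true).card : ℝ) < 41 * L}
          + P bad := by
      calc (1 : ℝ≥0∞) = P Set.univ := measure_univ.symm
        _ ≤ P ({ω | ((univ.filter fun v => torusDist n u v ≤ r ∧ ω v = true).card : ℝ)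
              < 41 * L} ∪ bad) := measure_mono hcover
        _ ≤ _ := measure_union_le _ _
    calc ENNReal.ofReal (1 - εr) = 1 - ENNReal.ofReal εr := by
          rw [ENNReal.ofReal_sub _ hεr0, ENNReal.ofReal_one]
      _ ≤ 1 - P bad := tsub_le_tsub_left hbad 1
      _ ≤ _ := tsub_le_iff_right.mpr h1
  -- Chernoff bound for the bad event
  set m : ℕ := (univ.filter fun v : Fin n × Fin n => torusDist n u v ≤ r).card with hmdef
  have hmball : (m : ℝ) ≤ 2 * (r:ℝ) ^ 2 + 2 * r + 1 := by
    have := tg_ball_card n r (by omega) u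
    rw [← hmdef] at this
    exact_mod_cast this
  have hrR : (3:ℝ) ≤ (r:ℝ) := by exact_mod_cast hr1
  have hsq : (r : ℝ) ^ 2 ≤ 9 * ((k : ℝ) * L) := by
    have h0 : (0:ℝ) ≤ (k : ℝ) * L := le_of_lt (mul_pos hkR hLpos)
    have h1 : ((r : ℝ)) ^ 2 ≤ (3 * Real.sqrt ((k : ℝ) * L)) ^ 2 :=
      pow_le_pow_left₀ (by positivity) hr2 2
    calc ((r : ℝ)) ^ 2 ≤ (3 * Real.sqrt ((k : ℝ) * L)) ^ 2 := h1
      _ = 9 * (Real.sqrt ((k : ℝ) * L)) ^ 2 := by ring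
      _ = 9 * ((k : ℝ) * L) := by rw [Real.sq_sqrt h0]
  have hm27 : (m : ℝ) ≤ 27 * ((k : ℝ) * L) := by nlinarith
  have hmk : (m : ℝ) * (k : ℝ)⁻¹ ≤ 27 * L := by
    rw [← div_eq_mul_inv, div_le_iff₀ hkR]
    calc (m:ℝ) ≤ 27 * ((k:ℝ) * L) := hm27
      _ = 27 * L * k := by ring
  set a : ℕ := ⌈41 * L⌉₊ with hadef
  have haL : 41 * L ≤ (a : ℝ) := Nat.le_ceil _
  set c : ℝ≥0∞ := ENNReal.ofReal (3/2 : ℝ) with hcdef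
  have hc1 : (1:ℝ≥0∞) ≤ c := by
    rw [hcdef, ← ENNReal.ofReal_one]
    exact ENNReal.ofReal_le_ofReal (by norm_num)
  set p : ℝ≥0∞ := (k : ℝ≥0∞)⁻¹ with hpdef
  have hp1 : p ≤ 1 := ENNReal.inv_le_one.mpr (by exact_mod_cast hk)
  set g : (Fin n × Fin n) → Bool → ℝ≥0∞ :=
    fun v b => if torusDist n u v ≤ r ∧ b = true then c else 1 with hgdef
  have hpow : ∀ ω, c ^ X ω = ∏ v, g v (ω v) := by
    intro ω
    rw [hgdef]
    rw [Finset.prod_ite (fun _ => c) (fun _ => (1:ℝ≥0∞)), Finset.prod_const,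
      Finset.prod_const_one, mul_one]
  have hXmeas : AEMeasurable (fun ω => c ^ X ω) P :=
    Measurable.aemeasurable (fun s _ => tg_measAll _)
  have hint : ∫⁻ ω, c ^ X ω ∂P = (c * p + (1 - p)) ^ m := by
    calc ∫⁻ ω, c ^ X ω ∂P = ∫⁻ ω, ∏ v, g v (ω v) ∂P := by
          refine lintegral_congr fun ω => hpow ω
      _ = ∏ v, (g v true * p + g v false * (1 - p)) := tg_lintegral n k hk g
      _ = ∏ v, (if torusDist n u v ≤ r then c * p + (1 - p) else 1) := by
          refine Finset.prod_congr rfl fun v _ => ?_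
          rw [hgdef]
          by_cases hv : torusDist n u v ≤ r
          · simp [hv]
          · simp [hv, add_tsub_cancel_of_le hp1]
      _ = (c * p + (1 - p)) ^ m := by
          rw [Finset.prod_ite (fun _ => c * p + (1 - p)) (fun _ => (1:ℝ≥0∞)),
            Finset.prod_const, Finset.prod_const_one, mul_one, hmdef]
  have hsubset : bad ⊆ {ω | c ^ a ≤ c ^ X ω} := by
    intro ω hω
    have hax : a ≤ X ω := Nat.ceil_le.mpr hω
    exact pow_le_pow_right₀ hc1 hax
  have markov : c ^ a * P bad ≤ (c * p + (1 - p)) ^ m := by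
    calc c ^ a * P bad ≤ c ^ a * P {ω | c ^ a ≤ c ^ X ω} := by
          exact mul_le_mul_right (measure_mono hsubset) _
      _ ≤ ∫⁻ ω, c ^ X ω ∂P := mul_meas_ge_le_lintegral₀ hXmeas _
      _ = _ := hint
  -- convert to real numbers
  set p' : ℝ := (k : ℝ)⁻¹ with hp'def
  have hp'0 : 0 ≤ p' := by positivity
  have hp'1 : p' ≤ 1 := by
    rw [hp'def, inv_le_one_iff₀]
    right; exact_mod_cast hk
  have hpreal : p = ENNReal.ofReal p' := by
    rw [hpdef, hp'def, ENNReal.ofReal_inv_of_pos hkR, ENNReal.ofReal_natCast]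
  set q' : ℝ := (3/2) * p' + (1 - p') with hq'def
  have hq'0 : 0 ≤ q' := by rw [hq'def]; nlinarith
  have hqreal : c * p + (1 - p) = ENNReal.ofReal q' := by
    rw [hq'def, ENNReal.ofReal_add (by positivity) (by linarith), hcdef, hpreal,
      ← ENNReal.ofReal_mul (by norm_num), ENNReal.ofReal_sub _ hp'0, ENNReal.ofReal_one]
  have hPbad : P bad ≤ ENNReal.ofReal (q' ^ m / (3/2 : ℝ) ^ a) := by
    rw [ENNReal.ofReal_div_of_pos (by positivity)]
    rw [ENNReal.le_div_iff_mul_le (Or.inl (by simp [ENNReal.ofReal_eq_zero]))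
      (Or.inl ENNReal.ofReal_ne_top)]
    calc P bad * ENNReal.ofReal ((3/2:ℝ) ^ a) = c ^ a * P bad := by
          rw [hcdef, ← ENNReal.ofReal_pow (by norm_num), mul_comm]
      _ ≤ (c * p + (1 - p)) ^ m := markov
      _ = ENNReal.ofReal (q' ^ m) := by rw [hqreal, ← ENNReal.ofReal_pow hq'0]
  refine hPbad.trans (ENNReal.ofReal_le_ofReal ?_)
  -- the real-number estimate
  have hq'exp : q' ≤ Real.exp (p' / 2) := by
    have := Real.add_one_le_exp (p' / 2)
    rw [hq'def]; linarith
  have hexp25 : Real.exp (2/5) ≤ 3/2 := by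
    have h5 : Real.exp (2/5) ^ (5:ℕ) = Real.exp 2 := by
      rw [← Real.exp_nat_mul]; norm_num
    have he2 : Real.exp 2 ≤ (3/2 : ℝ) ^ (5:ℕ) := by
      have h := Real.exp_one_lt_d9
      have he : Real.exp 2 = Real.exp 1 * Real.exp 1 := by
        rw [← Real.exp_add]; norm_num
      nlinarith [Real.exp_pos 1]
    refine le_of_pow_le_pow_left₀ (n := 5) (by norm_num) (by norm_num) ?_
    rw [h5]; exact he2
  have step2 : q' ^ m ≤ Real.exp ((m : ℝ) * (p' / 2)) := by
    calc q' ^ m ≤ Real.exp (p' / 2) ^ m := pow_le_pow_left₀ hq'0 hq'exp m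
      _ = Real.exp ((m : ℝ) * (p' / 2)) := (Real.exp_nat_mul _ m).symm
  have step3 : Real.exp ((2/5) * (a : ℝ)) ≤ (3/2 : ℝ) ^ a := by
    calc Real.exp ((2/5) * (a : ℝ)) = Real.exp ((a : ℝ) * (2/5)) := by ring_nf
      _ = Real.exp (2/5) ^ a := Real.exp_nat_mul _ a
      _ ≤ (3/2 : ℝ) ^ a := pow_le_pow_left₀ (le_of_lt (Real.exp_pos _)) hexp25 a
  have hdiv : q' ^ m / (3/2 : ℝ) ^ a ≤ Real.exp ((m : ℝ) * (p' / 2) - (2/5) * (a : ℝ)) := by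
    rw [Real.exp_sub]
    exact div_le_div₀ (le_of_lt (Real.exp_pos _)) step2 (Real.exp_pos _) step3
  refine hdiv.trans ?_
  have hεrexp : εr = Real.exp (Real.log (Real.logb 2 n) * (-(3.89:ℝ))) := by
    rw [hεrdef, Real.rpow_def_of_pos hlogn0]
  have hlogL : Real.log (Real.logb 2 n) = L * Real.log 2 := by
    have h2 : Real.log 2 ≠ 0 := ne_of_gt (Real.log_pos (by norm_num))
    rw [hLdef]
    simp only [Real.logb]
    rw [div_mul_cancel₀ _ h2]
  rw [hεrexp, hlogL]
  apply Real.exp_le_exp.mpr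
  have hE1 : (m : ℝ) * (p' / 2) ≤ 13.5 * L := by
    rw [hp'def]
    calc (m : ℝ) * ((k:ℝ)⁻¹ / 2) = ((m:ℝ) * (k:ℝ)⁻¹) / 2 := by ring
      _ ≤ (27 * L) / 2 := by linarith
      _ = 13.5 * L := by ring
  have hE2 : 16.4 * L ≤ (2/5) * (a : ℝ) := by linarith
  have hlog2 := Real.log_two_lt_d9
  nlinarith [hLpos]
end

section
/- Let n ≥ 2 and k ≥ 1 be integers, let c ≥ 1 be a real number, and let j be an integer with log₂(c·(k + log₂ n)) ≤ j and 2^{j+1} < n. Let each of the n² vertices of the n×n torus grid be included in a random set H independently with probability 1/k. Then for any fixed vertex t of the torus, with probability at least 1 − n^{−0.18·c²}, the ball B_{2^j}(t) contains at least 2^{2j−2}/k vertices of H. -/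
open Finset MeasureTheory
open scoped ENNReal NNReal

/-! ### Auxiliary lemmas -/

lemma oneD_dist (n s x a : ℕ) (hx : x < n) (ha : a ≤ 2*s) (hs : 2*s < n) :
    min ((x + n - ((x + (n - s + a)) % n)) % n)
      (n - (x + n - ((x + (n - s + a)) % n)) % n) ≤ s := by
  rcases le_or_gt a s with h | h
  · set d := s - a with hd
    rcases le_or_gt d x with hdx | hdx
    · have hy : (x + (n - s + a)) % n = x - d := by
        rw [show x + (n - s + a) = (x - d) + n by omega, Nat.add_mod_right,
          Nat.mod_eq_of_lt (by omega)]
      rw [hy, show x + n - (x - d) = d + n by omega, Nat.add_mod_right,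
        Nat.mod_eq_of_lt (by omega)]
      omega
    · have hy : (x + (n - s + a)) % n = x + n - d := by
        rw [show x + (n - s + a) = x + n - d by omega, Nat.mod_eq_of_lt (by omega)]
      rw [hy, show x + n - (x + n - d) = d by omega, Nat.mod_eq_of_lt (by omega)]
      omega
  · set d := a - s with hd
    rcases lt_or_ge (x + d) n with hxd | hxd
    · have hy : (x + (n - s + a)) % n = x + d := by
        rw [show x + (n - s + a) = (x + d) + n by omega, Nat.add_mod_right,
          Nat.mod_eq_of_lt hxd]
      rw [hy, show x + n - (x + d) = n - d by omega, Nat.mod_eq_of_lt (by omega)]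
      omega
    · have hy : (x + (n - s + a)) % n = x + d - n := by
        rw [show x + (n - s + a) = (x + d - n) + n + n by omega, Nat.add_mod_right,
          Nat.add_mod_right, Nat.mod_eq_of_lt (by omega)]
      rw [hy, show x + n - (x + d - n) = (n - d) + n by omega, Nat.add_mod_right,
        Nat.mod_eq_of_lt (by omega)]
      omega

lemma oneD_inj (n s x a b : ℕ) (ha : a ≤ 2*s) (hb : b ≤ 2*s) (hs : 2*s < n)
    (h : (x + (n - s + a)) % n = (x + (n - s + b)) % n) : a = b := by
  have h' : (x + (n - s)) + a ≡ (x + (n - s)) + b [MOD n] := by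
    unfold Nat.ModEq
    rw [show x + (n-s) + a = x + (n - s + a) by omega,
      show x + (n-s) + b = x + (n - s + b) by omega, h]
  have h1 : a % n = b % n := Nat.ModEq.add_left_cancel' _ h'
  rwa [Nat.mod_eq_of_lt (by omega), Nat.mod_eq_of_lt (by omega)] at h1

lemma pi_iInter_eval {ι : Type*} [Fintype ι] {α : ι → Type*} [∀ i, MeasurableSpace (α i)]
    (μ : ∀ i, Measure (α i)) [∀ i, IsProbabilityMeasure (μ i)] (S : Finset ι)
    (sets : ∀ i, Set (α i)) :
    Measure.pi μ (⋂ i ∈ S, Function.eval i ⁻¹' sets i) = ∏ i ∈ S, μ i (sets i) := by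
  classical
  have hset : (⋂ i ∈ S, Function.eval i ⁻¹' sets i) =
      Set.pi Set.univ (fun i => if i ∈ S then sets i else Set.univ) := by
    ext x
    simp only [Set.mem_iInter, Set.mem_preimage, Set.mem_pi, Set.mem_univ, true_implies]
    constructor
    · intro h i; split_ifs with hi
      · exact h i hi
      · trivial
    · intro h i hi; have := h i; rwa [if_pos hi] at this
  rw [hset, Measure.pi_pi]
  rw [show (∏ i, μ i (if i ∈ S then sets i else Set.univ)) =
      ∏ i, (if i ∈ S then μ i (sets i) else 1) from
    Finset.prod_congr rfl fun i _ => by split_ifs <;> simp]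
  rw [Finset.prod_ite_mem Finset.univ S fun i => μ i (sets i), Finset.univ_inter]

lemma iIndepFun_eval {ι : Type*} [Fintype ι] {α : ι → Type*} [∀ i, MeasurableSpace (α i)]
    (μ : ∀ i, Measure (α i)) [∀ i, IsProbabilityMeasure (μ i)] :
    ProbabilityTheory.iIndepFun (fun i (ω : ∀ i, α i) => ω i)
      (Measure.pi μ) := by
  rw [ProbabilityTheory.iIndepFun_iff_measure_inter_preimage_eq_mul]
  intro S sets _
  rw [pi_iInter_eval μ S sets]
  refine Finset.prod_congr rfl fun i _ => ?_
  have := pi_iInter_eval μ {i} sets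
  simpa using this.symm

lemma map_eval_pi {ι : Type*} [Fintype ι] {α : ι → Type*} [∀ i, MeasurableSpace (α i)]
    (μ : ∀ i, Measure (α i)) [∀ i, IsProbabilityMeasure (μ i)] (i : ι) :
    (Measure.pi μ).map (Function.eval i) = μ i := by
  classical
  ext s hs
  rw [Measure.map_apply (measurable_pi_apply i) hs]
  have := pi_iInter_eval μ {i} (fun j => if h : j = i then h ▸ s else Set.univ)
  simpa using this

instance highway_prob (n k : ℕ) (hk : 1 ≤ k) : IsProbabilityMeasure (highwayMeasure n k hk) := by
  unfold highwayMeasure; infer_instance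

lemma mgf_coord (n k : ℕ) (hk : 1 ≤ k) (v : Fin n × Fin n) (t : ℝ) :
    ProbabilityTheory.mgf (fun ω => if ω v then (1:ℝ) else 0) (highwayMeasure n k hk) t
      = (1 - (k:ℝ)⁻¹) + (k:ℝ)⁻¹ * Real.exp t := by
  have hq : ((k : ℝ≥0)⁻¹) ≤ 1 := inv_le_one_of_one_le₀ (by exact_mod_cast hk)
  rw [ProbabilityTheory.mgf]
  have h2 : ∫ ω, Real.exp (t * if ω v then (1:ℝ) else 0) ∂(highwayMeasure n k hk)
      = ∫ b, Real.exp (t * if b then (1:ℝ) else 0)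
          ∂((highwayMeasure n k hk).map (Function.eval v)) :=
    (@integral_map ((Fin n × Fin n) → Bool) ℝ _ _ _ (highwayMeasure n k hk) Bool _
      (Function.eval v) ((measurable_pi_apply v).aemeasurable)
      (fun b => Real.exp (t * if b then (1:ℝ) else 0))
      (Measurable.of_discrete.aestronglyMeasurable)).symm
  rw [h2]
  rw [show (highwayMeasure n k hk).map (Function.eval v)
      = (PMF.bernoulli (k : ℝ≥0)⁻¹ hq).toMeasure from map_eval_pi _ v]
  rw [PMF.integral_eq_sum]
  simp only [Fintype.sum_bool, PMF.bernoulli_apply, Bool.cond_true, Bool.cond_false,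
    if_true, if_false, mul_one, mul_zero, Real.exp_zero, smul_eq_mul]
  have h3 : (((k : ℝ≥0)⁻¹ : ℝ≥0) : ℝ≥0∞).toReal = (k:ℝ)⁻¹ := by
    simp
  have h4 : (((1 - (k : ℝ≥0)⁻¹ : ℝ≥0)) : ℝ≥0∞).toReal = 1 - (k:ℝ)⁻¹ := by
    rw [ENNReal.coe_toReal, NNReal.coe_sub hq]; simp
  rw [h3, h4]; norm_num; ring

lemma final_num (nR c Q : ℝ) (hn : 2 ≤ nR) (hc : 1 ≤ c)
    (hQ : 4 * c^2 * Real.logb 2 nR ≤ Q) :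
    Real.log 4 * (Q/4) - (3/4)*Q ≤ -(0.18*c^2) * Real.log nR := by
  have hlog2 : Real.log 2 < 0.6931471808 := Real.log_two_lt_d9
  have hlog2pos : 0 < Real.log 2 := Real.log_pos one_lt_two
  have hlogn : Real.log 2 ≤ Real.log nR := Real.log_le_log (by norm_num) hn
  have hlognpos : 0 < Real.log nR := lt_of_lt_of_le hlog2pos hlogn
  have hlog4 : Real.log 4 = 2 * Real.log 2 := by
    rw [show (4:ℝ) = 2^2 by norm_num, Real.log_pow]; push_cast; ring
  have hQ' : 5 * c^2 * Real.log nR ≤ Q := by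
    refine le_trans ?_ hQ
    rw [Real.logb, show 4 * c^2 * (Real.log nR / Real.log 2)
      = (4 * c^2 * Real.log nR) / Real.log 2 from by ring, le_div_iff₀ hlog2pos]
    nlinarith [mul_nonneg (sq_nonneg c) hlognpos.le]
  have h6 : Real.log 4 ≤ 1.4 := by nlinarith
  have hA : (0:ℝ) ≤ c^2 * Real.log nR := mul_nonneg (sq_nonneg c) hlognpos.le
  nlinarith [mul_nonneg (by nlinarith : (0:ℝ) ≤ 3 - Real.log 4)
    (by nlinarith : (0:ℝ) ≤ Q - 5*(c^2*Real.log nR))]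

set_option maxHeartbeats 2000000 in
/-- for `n ≥ 2`, `k ≥ 1`, a real `c ≥ 1` and an integer `j` with
`log₂(c·(k + log₂ n)) ≤ j` and `2^{j+1} < n`, for any fixed vertex `t`, with probability
at least `1 − n^{−0.18·c²}` the ball of radius `2^j` around `t` contains at least
`2^{2j−2}/k` highway nodes. -/
theorem statement13 (n k : ℕ) (hn : 2 ≤ n) (hk : 1 ≤ k) (c : ℝ) (hc : 1 ≤ c) (j : ℕ)
    (hj1 : Real.logb 2 (c * (k + Real.logb 2 n)) ≤ j) (hj2 : 2 ^ (j + 1) < n)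
    (t : Fin n × Fin n) :
    highwayMeasure n k hk
      {ω | (2 : ℝ) ^ (2 * (j : ℝ) - 2) / k ≤
          ((univ.filter fun v => torusDist n t v ≤ 2 ^ j ∧ ω v = true).card : ℝ)} ≥
      ENNReal.ofReal (1 - (n : ℝ) ^ (-(0.18 * c ^ 2))) := by
  classical
  set π := highwayMeasure n k hk with hπ
  have hn0 : 0 < n := by omega
  have hL1 : (1:ℝ) ≤ Real.logb 2 n := by
    rw [Real.le_logb_iff_rpow_le (by norm_num) (by positivity)]
    simpa using (by exact_mod_cast hn : (2:ℝ) ≤ n)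
  have hkR : (1:ℝ) ≤ (k:ℝ) := by exact_mod_cast hk
  have hck2 : (2:ℝ) ≤ c * (k + Real.logb 2 n) := by nlinarith
  have h2j : c * ((k:ℝ) + Real.logb 2 n) ≤ 2^j := by
    rw [Real.logb_le_iff_le_rpow (by norm_num) (by linarith)] at hj1
    simpa [Real.rpow_natCast] using hj1
  have h2jn : (2:ℝ) ≤ 2^j := le_trans hck2 h2j
  have hjge1 : 1 ≤ j := by
    by_contra h
    have hj0 : j = 0 := by omega
    rw [hj0] at h2jn; norm_num at h2jn
  set s := 2^(j-1) with hs
  have h2s : 2*s = 2^j := by rw [hs, ← pow_succ']; congr 1; omega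
  have hsn : 2*s < n := by
    have : 2^j < 2^(j+1) := Nat.pow_lt_pow_right (by norm_num) (by omega)
    omega
  set ψ : Fin (2*s+1) × Fin (2*s+1) → Fin n × Fin n := fun q =>
    (⟨(t.1.val + (n - s + q.1.val)) % n, Nat.mod_lt _ hn0⟩,
     ⟨(t.2.val + (n - s + q.2.val)) % n, Nat.mod_lt _ hn0⟩) with hψ
  have hψinj : Function.Injective ψ := by
    rintro ⟨a1, a2⟩ ⟨b1, b2⟩ h
    have h1 : (t.1.val + (n - s + a1.val)) % n = (t.1.val + (n - s + b1.val)) % n := by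
      have := congrArg (fun x => x.1.val) h; simpa [hψ] using this
    have h2 : (t.2.val + (n - s + a2.val)) % n = (t.2.val + (n - s + b2.val)) % n := by
      have := congrArg (fun x => x.2.val) h; simpa [hψ] using this
    have e1 := oneD_inj n s t.1.val a1.val b1.val (Nat.lt_succ_iff.mp a1.isLt)
      (Nat.lt_succ_iff.mp b1.isLt) hsn h1
    have e2 := oneD_inj n s t.2.val a2.val b2.val (Nat.lt_succ_iff.mp a2.isLt)
      (Nat.lt_succ_iff.mp b2.isLt) hsn h2
    simp [Prod.ext_iff, Fin.ext_iff, e1, e2]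
  set B' : Finset (Fin n × Fin n) := Finset.image ψ Finset.univ with hB'
  have hball : ∀ v ∈ B', torusDist n t v ≤ 2^j := by
    intro v hv
    rw [hB', Finset.mem_image] at hv
    obtain ⟨q, _, rfl⟩ := hv
    have d1 := oneD_dist n s t.1.val q.1.val t.1.isLt (Nat.lt_succ_iff.mp q.1.isLt) hsn
    have d2 := oneD_dist n s t.2.val q.2.val t.2.isLt (Nat.lt_succ_iff.mp q.2.isLt) hsn
    unfold torusDist
    simp only [hψ]
    omega
  have hcardB : B'.card = (2*s+1) * (2*s+1) := by
    rw [hB', Finset.card_image_of_injective _ hψinj, Finset.card_univ]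
    simp
  -- random variables
  set X : (Fin n × Fin n) → ((Fin n × Fin n) → Bool) → ℝ :=
    fun v ω => if ω v then 1 else 0 with hX
  have hXmeas : ∀ v, Measurable (X v) := fun v =>
    (Measurable.of_discrete (f := fun b : Bool => if b then (1:ℝ) else 0)).comp
      (measurable_pi_apply v)
  have hindep : ProbabilityTheory.iIndepFun X π := by
    have h := iIndepFun_eval (fun _ : Fin n × Fin n =>
      (PMF.bernoulli (k : ℝ≥0)⁻¹ (inv_le_one_of_one_le₀ (by exact_mod_cast hk))).toMeasure)
    exact h.comp (fun _ (b : Bool) => if b then (1:ℝ) else 0) (fun _ => Measurable.of_discrete)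
  set tc : ℝ := -Real.log 4 with htc
  have htc0 : tc ≤ 0 := neg_nonpos.mpr (Real.log_nonneg (by norm_num))
  have hexp_tc : Real.exp tc = 4⁻¹ := by
    rw [htc, Real.exp_neg, Real.exp_log (by norm_num)]
  set p : ℝ := (k:ℝ)⁻¹ with hp
  have hp0 : 0 < p := by rw [hp]; positivity
  have hp1 : p ≤ 1 := by
    rw [hp]
    exact inv_le_one_of_one_le₀ hkR
  have hmgf : ProbabilityTheory.mgf (∑ v ∈ B', X v) π tc
      = ((1 - p) + p * Real.exp tc)^B'.card := by
    rw [hindep.mgf_sum hXmeas B']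
    rw [Finset.prod_congr rfl fun v _ => mgf_coord n k hk v tc]
    rw [Finset.prod_const]
  set a : ℝ := (2 : ℝ) ^ (2 * (j : ℝ) - 2) / k with haa
  set Q : ℝ := (2:ℝ)^(2*j)/k with hQdef
  have hQ0 : 0 < Q := by rw [hQdef]; positivity
  have ha : a = Q/4 := by
    rw [haa, hQdef]
    have h1 : (2 : ℝ) ^ (2 * (j : ℝ) - 2) = (2:ℝ)^(2*(j:ℝ)) / (2:ℝ)^(2:ℝ) :=
      Real.rpow_sub (by norm_num) _ _
    have h2 : (2:ℝ)^(2*(j:ℝ)) = (2:ℝ)^(2*j) := by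
      rw [show 2*(j:ℝ) = ((2*j : ℕ):ℝ) by push_cast; ring, Real.rpow_natCast]
    have h3 : (2:ℝ)^(2:ℝ) = 4 := by
      rw [show (2:ℝ) = ((2:ℕ):ℝ) by norm_num, Real.rpow_natCast]; norm_num
    rw [h1, h2, h3]; ring
  have hm4 : (2:ℝ)^(2*j) ≤ (B'.card : ℝ) := by
    have hnat : (2:ℕ)^(2*j) ≤ (2*s+1)*(2*s+1) := by
      rw [two_mul j, pow_add, ← h2s]; nlinarith
    rw [hcardB]
    exact_mod_cast hnat
  have hQm : Q ≤ p * B'.card := by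
    rw [hQdef, hp, div_eq_mul_inv, mul_comm ((2:ℝ)^(2*j)) ((k:ℝ)⁻¹)]
    exact mul_le_mul_of_nonneg_left hm4 (by positivity : (0:ℝ) ≤ (k:ℝ)⁻¹)
  have hQ4L : 4 * c^2 * Real.logb 2 n ≤ Q := by
    rw [hQdef]
    have hsq : c^2 * ((k:ℝ) + Real.logb 2 n)^2 ≤ (2:ℝ)^(2*j) := by
      rw [two_mul j, pow_add]
      have h0 : (0:ℝ) ≤ c * ((k:ℝ) + Real.logb 2 n) := by linarith
      calc c^2 * ((k:ℝ) + Real.logb 2 n)^2 = (c * ((k:ℝ) + Real.logb 2 n))^2 := by ring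
        _ ≤ ((2:ℝ)^j)^2 := by nlinarith
        _ = (2:ℝ)^j * (2:ℝ)^j := sq ((2:ℝ)^j) ▸ by ring
    rw [le_div_iff₀ (by exact_mod_cast Nat.pos_of_ne_zero (by omega) : (0:ℝ) < (k:ℝ))]
    have hexpand : c^2*((k:ℝ) + Real.logb 2 n)^2
        = 4*c^2*Real.logb 2 n*(k:ℝ) + c^2*((k:ℝ) - Real.logb 2 n)^2 := by ring
    have hnn : (0:ℝ) ≤ c^2*((k:ℝ) - Real.logb 2 n)^2 :=
      mul_nonneg (sq_nonneg c) (sq_nonneg _)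
    linarith
  haveI hinst : IsProbabilityMeasure π := highway_prob n k hk
  have hint : Integrable (fun ω => Real.exp (tc * (∑ v ∈ B', X v) ω)) π :=
    Integrable.of_finite
  have hcher := ProbabilityTheory.measure_le_le_exp_mul_mgf (μ := π)
    (X := ∑ v ∈ B', X v) a htc0 hint
  have hbase0 : (0:ℝ) ≤ (1 - p) + p * Real.exp tc := by
    rw [hexp_tc]; nlinarith
  have hbase : (1 - p) + p * Real.exp tc ≤ Real.exp (-(3/4)*p) := by
    rw [hexp_tc]
    have := Real.add_one_le_exp (-(3/4)*p)
    nlinarith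
  have hbound : Real.exp (-tc * a) * ProbabilityTheory.mgf (∑ v ∈ B', X v) π tc
      ≤ (n:ℝ) ^ (-(0.18 * c ^ 2)) := by
    rw [hmgf]
    have s1 : ((1 - p) + p * Real.exp tc)^B'.card ≤ (Real.exp (-(3/4)*p))^B'.card :=
      pow_le_pow_left₀ hbase0 hbase _
    have s2 : (Real.exp (-(3/4)*p))^B'.card = Real.exp (-(3/4)*p*B'.card) := by
      rw [← Real.exp_nat_mul]; congr 1; ring
    have s4 : -tc*a + -(3/4)*p*(B'.card:ℝ) ≤ Real.log 4 * (Q/4) - (3/4)*Q := by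
      have e1 : -tc*a = Real.log 4 * (Q/4) := by rw [htc, ha]; ring
      rw [e1]
      linarith
    calc Real.exp (-tc * a) * (((1 - p) + p * Real.exp tc)^B'.card)
        ≤ Real.exp (-tc*a) * Real.exp (-(3/4)*p*B'.card) :=
          mul_le_mul_of_nonneg_left (s1.trans_eq s2) (Real.exp_nonneg _)
      _ = Real.exp (-tc*a + -(3/4)*p*B'.card) := (Real.exp_add _ _).symm
      _ ≤ Real.exp (-(0.18*c^2) * Real.log n) :=
          Real.exp_le_exp.mpr (le_trans s4 (final_num n c Q (by exact_mod_cast hn) hc hQ4L))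
      _ = (n:ℝ) ^ (-(0.18*c^2)) := by
          rw [Real.rpow_def_of_pos (by positivity : (0:ℝ) < (n:ℝ)), mul_comm]
  have hcover : Set.univ ⊆ {ω : (Fin n × Fin n) → Bool |
        a ≤ ((Finset.filter (fun v => torusDist n t v ≤ 2 ^ j ∧ ω v = true)
          Finset.univ).card : ℝ)} ∪ {ω | (∑ v ∈ B', X v) ω ≤ a} := by
    intro ω _
    by_cases hω : (∑ v ∈ B', X v) ω ≤ a
    · right; exact hω
    · left
      push_neg at hω
      have hsum : (∑ v ∈ B', X v) ω = ((B'.filter fun v => ω v = true).card : ℝ) := by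
        rw [Finset.sum_apply]
        simp only [hX]
        exact Finset.sum_boole (fun v => ω v = true) B' 
      have hsub : (B'.filter fun v => ω v = true) ⊆
          (Finset.filter (fun v => torusDist n t v ≤ 2^j ∧ ω v = true) Finset.univ) := by
        intro v hv
        rw [Finset.mem_filter] at hv
        rw [Finset.mem_filter]
        exact ⟨Finset.mem_univ v, hball v hv.1, hv.2⟩
      have hcle : ((B'.filter fun v => ω v = true).card : ℝ)
          ≤ ((Finset.filter (fun v => torusDist n t v ≤ 2^j ∧ ω v = true)
            Finset.univ).card : ℝ) := by exact_mod_cast Finset.card_le_card hsub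
      show a ≤ _
      calc a ≤ (∑ v ∈ B', X v) ω := le_of_lt hω
        _ = _ := hsum
        _ ≤ _ := hcle
  have hx0 : (0:ℝ) ≤ (n:ℝ)^(-(0.18*c^2)) := Real.rpow_nonneg (by positivity) _
  have hES : π {ω | (∑ v ∈ B', X v) ω ≤ a} ≤ ENNReal.ofReal ((n:ℝ)^(-(0.18*c^2))) := by
    rw [ENNReal.le_ofReal_iff_toReal_le (measure_ne_top π _) hx0]
    exact le_trans hcher hbound
  have hfinal : (1:ℝ≥0∞) ≤ π {ω : (Fin n × Fin n) → Bool |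
        a ≤ ((Finset.filter (fun v => torusDist n t v ≤ 2 ^ j ∧ ω v = true)
          Finset.univ).card : ℝ)} + ENNReal.ofReal ((n:ℝ)^(-(0.18*c^2))) := by
    calc (1:ℝ≥0∞) = π Set.univ := measure_univ.symm
      _ ≤ π ({ω : (Fin n × Fin n) → Bool |
            a ≤ ((Finset.filter (fun v => torusDist n t v ≤ 2 ^ j ∧ ω v = true)
              Finset.univ).card : ℝ)} ∪ {ω | (∑ v ∈ B', X v) ω ≤ a}) := measure_mono hcover
      _ ≤ π {ω : (Fin n × Fin n) → Bool |
            a ≤ ((Finset.filter (fun v => torusDist n t v ≤ 2 ^ j ∧ ω v = true)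
              Finset.univ).card : ℝ)} + π {ω | (∑ v ∈ B', X v) ω ≤ a} := measure_union_le _ _
      _ ≤ _ + ENNReal.ofReal ((n:ℝ)^(-(0.18*c^2))) := add_le_add_right hES _
  rw [ge_iff_le, ENNReal.ofReal_sub _ hx0, ENNReal.ofReal_one, tsub_le_iff_right]
  exact hfinal
end

section
/- Let n ≥ 3 and k ≥ 1 be integers. Let each of the n² vertices of the n×n torus grid be included in a random set H independently with probability 1/k, and fix a vertex u. Then with probability at least 1/2, the random normalization constant z = Σ_{v ∈ H, v ≠ u} d(u,v)^{−2} satisfies z ≤ 10 + 37·(log₂ n)/k. -/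
open Finset MeasureTheory
open scoped ENNReal NNReal

lemma mod_rep {n x y : ℕ} (hx : x < n) (hy : y < n) :
    (x + n - y) % n = if y ≤ x then x - y else x + n - y := by
  rcases le_or_gt y x with h | h
  · rw [if_pos h, show x + n - y = (x - y) + n by omega, Nat.add_mod_right,
      Nat.mod_eq_of_lt (by omega)]
  · rw [if_neg (by omega), Nat.mod_eq_of_lt (by omega)]

lemma delta_inj {n x y y' : ℕ} (hx : x < n) (hy : y < n) (hy' : y' < n)
    (h : min ((x + n - y) % n) (n - (x + n - y) % n)
       = min ((x + n - y') % n) (n - (x + n - y') % n))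
    (hb : 2 * ((x + n - y) % n) ≤ n ↔ 2 * ((x + n - y') % n) ≤ n) : y = y' := by
  rw [mod_rep hx hy, mod_rep hx hy'] at h hb
  split_ifs at h hb <;> omega

lemma min_eq_zero' {n x y : ℕ} (hx : x < n) (hy : y < n)
    (h : min ((x + n - y) % n) (n - (x + n - y) % n) = 0) : x = y := by
  rw [mod_rep hx hy] at h
  split_ifs at h <;> omega

lemma invSq_tail (m : ℕ) (hm : 1 ≤ m) {M : ℕ} (hM : m ≤ M) :
    ∑ j ∈ Finset.Ico m M, ((j : ℝ) ^ 2)⁻¹ ≤ 2 / m - 2 / M := by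
  induction M, hM using Nat.le_induction with
  | base => simp
  | succ M hmM ih =>
    rw [Finset.sum_Ico_succ_top hmM]
    have h1 : (1 : ℝ) ≤ m := by exact_mod_cast hm
    have h2 : (m : ℝ) ≤ M := by exact_mod_cast hmM
    have hMpos : (0 : ℝ) < M := by linarith
    have key : ((M : ℝ) ^ 2)⁻¹ ≤ 2 / M - 2 / (M + 1) := by
      rw [div_sub_div _ _ hMpos.ne' (by positivity), le_div_iff₀ (by positivity),
        inv_mul_eq_div, div_le_iff₀ (by positivity)]
      ring_nf
      nlinarith
    push_cast
    linarith

lemma inner_pos (n a : ℕ) (ha : 1 ≤ a) :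
    ∑ b ∈ Finset.range (n + 1), (((a + b : ℕ) : ℝ) ^ 2)⁻¹ ≤ 2 / a := by
  have h : ∑ j ∈ Finset.Ico a (a + (n + 1)), ((j : ℝ) ^ 2)⁻¹
      = ∑ b ∈ Finset.range (n + 1), (((a + b : ℕ) : ℝ) ^ 2)⁻¹ := by
    rw [Finset.sum_Ico_eq_sum_range]
    simp
  rw [← h]
  have := invSq_tail a ha (M := a + (n + 1)) (by omega)
  have h2 : (0:ℝ) ≤ 2 / ((a : ℝ) + (n + 1)) := by positivity
  push_cast at this ⊢
  linarith

lemma inner_zero (n : ℕ) :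
    ∑ b ∈ Finset.range (n + 1), ((b : ℝ) ^ 2)⁻¹ ≤ 2 := by
  rw [Finset.sum_range_succ']
  have h : ∑ j ∈ Finset.Ico 1 (n + 1), ((j : ℝ) ^ 2)⁻¹
      = ∑ i ∈ Finset.range n, (((i + 1 : ℕ) : ℝ) ^ 2)⁻¹ := by
    rw [Finset.sum_Ico_eq_sum_range]
    simp [add_comm]
  have h2 := invSq_tail 1 le_rfl (M := n + 1) (by omega)
  rw [h] at h2
  have h3 : (0:ℝ) ≤ 2 / ((n : ℝ) + 1) := by positivity
  push_cast at h2 ⊢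
  norm_num
  linarith

lemma harmonic_sum (n : ℕ) :
    ∑ a ∈ Finset.Ico 1 (n + 1), ((a : ℝ))⁻¹ ≤ 1 + Real.log n := by
  have h1 : ∑ a ∈ Finset.Ico 1 (n + 1), ((a : ℝ))⁻¹ = ((harmonic n : ℚ) : ℝ) := by
    rw [harmonic_eq_sum_Icc]
    push_cast
    rw [← Finset.Ico_add_one_right_eq_Icc]
  rw [h1]
  exact harmonic_le_one_add_log n

lemma sum_invSq_le (n : ℕ) (hn : 1 ≤ n) (u : Fin n × Fin n) :
    ∑ v ∈ univ.erase u, ((torusDist n u v : ℝ) ^ 2)⁻¹ ≤ 16 + 8 * Real.log n := by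
  classical
  set E := (univ.erase u) with hE
  set φ : Fin n × Fin n → ℕ × ℕ := fun v =>
    (min ((u.1.val + n - v.1.val) % n) (n - (u.1.val + n - v.1.val) % n),
     min ((u.2.val + n - v.2.val) % n) (n - (u.2.val + n - v.2.val) % n)) with hφ
  set T : Finset (ℕ × ℕ) := Finset.range (n + 1) ×ˢ Finset.range (n + 1) with hT
  have hmaps : ∀ v ∈ E, φ v ∈ T := by
    intro v _
    simp only [hT, Finset.mem_product, Finset.mem_range, hφ]
    constructor
    · exact lt_of_le_of_lt (min_le_left _ _) (by
        have := Nat.mod_lt (u.1.val + n - v.1.val) (show 0 < n by omega); omega)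
    · exact lt_of_le_of_lt (min_le_left _ _) (by
        have := Nat.mod_lt (u.2.val + n - v.2.val) (show 0 < n by omega); omega)
  rw [← Finset.sum_fiberwise_of_maps_to hmaps]
  have hg0 : ∀ p : ℕ × ℕ, (0:ℝ) ≤ (((p.1 + p.2 : ℕ) : ℝ) ^ 2)⁻¹ := fun p => by positivity
  have hstep : ∀ p ∈ T, ∑ v ∈ E.filter (fun v => φ v = p), ((torusDist n u v : ℝ) ^ 2)⁻¹
      ≤ 4 * (((p.1 + p.2 : ℕ) : ℝ) ^ 2)⁻¹ := by
    intro p _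
    have hsummand : ∀ v ∈ E.filter (fun v => φ v = p),
        ((torusDist n u v : ℝ) ^ 2)⁻¹ = (((p.1 + p.2 : ℕ) : ℝ) ^ 2)⁻¹ := by
      intro v hv
      rw [Finset.mem_filter] at hv
      rw [← hv.2]
      rfl
    rw [Finset.sum_congr rfl hsummand, Finset.sum_const, nsmul_eq_mul]
    have hcard : (E.filter (fun v => φ v = p)).card ≤ 4 := by
      have hinj : Set.InjOn (fun v : Fin n × Fin n =>
          (decide (2 * ((u.1.val + n - v.1.val) % n) ≤ n),
           decide (2 * ((u.2.val + n - v.2.val) % n) ≤ n)))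
          (E.filter (fun v => φ v = p)) := by
        intro v hv w hw heq
        rw [Finset.coe_filter, Set.mem_setOf_eq] at hv hw
        have hφvw : φ v = φ w := hv.2.trans hw.2.symm
        have h1 := congrArg Prod.fst hφvw
        have h2 := congrArg Prod.snd hφvw
        simp only [hφ] at h1 h2
        have hb1 := congrArg Prod.fst heq
        have hb2 := congrArg Prod.snd heq
        simp only [decide_eq_decide] at hb1 hb2
        have e1 : v.1.val = w.1.val :=
          delta_inj u.1.isLt v.1.isLt w.1.isLt h1 hb1
        have e2 : v.2.val = w.2.val :=
          delta_inj u.2.isLt v.2.isLt w.2.isLt h2 hb2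
        exact Prod.ext (Fin.ext e1) (Fin.ext e2)
      have := Finset.card_le_card_of_injOn _ (fun v _ => Finset.mem_univ _) hinj
      simpa using this
    exact mul_le_mul_of_nonneg_right (by exact_mod_cast hcard) (hg0 p)
  calc ∑ p ∈ T, ∑ v ∈ E.filter (fun v => φ v = p), ((torusDist n u v : ℝ) ^ 2)⁻¹
      ≤ ∑ p ∈ T, 4 * (((p.1 + p.2 : ℕ) : ℝ) ^ 2)⁻¹ := Finset.sum_le_sum hstep
    _ = 4 * ∑ p ∈ T, (((p.1 + p.2 : ℕ) : ℝ) ^ 2)⁻¹ := by rw [Finset.mul_sum]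
    _ ≤ 16 + 8 * Real.log n := by
        have hsum : ∑ p ∈ T, (((p.1 + p.2 : ℕ) : ℝ) ^ 2)⁻¹
            = ∑ a ∈ Finset.range (n+1), ∑ b ∈ Finset.range (n+1), (((a + b : ℕ) : ℝ) ^ 2)⁻¹ := by
          rw [hT, Finset.sum_product]
        rw [hsum]
        have houter : ∑ a ∈ Finset.range (n+1), ∑ b ∈ Finset.range (n+1), (((a + b : ℕ) : ℝ) ^ 2)⁻¹
            ≤ 2 + (2 + 2 * Real.log n) := by
          rw [Finset.sum_range_succ']
          have hz : ∑ b ∈ Finset.range (n+1), (((0 + b : ℕ) : ℝ) ^ 2)⁻¹ ≤ 2 := by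
            simpa using inner_zero n
          have hp : ∑ a ∈ Finset.range n, ∑ b ∈ Finset.range (n+1), ((((a+1) + b : ℕ) : ℝ) ^ 2)⁻¹
              ≤ 2 + 2 * Real.log n := by
            have h1 : ∀ a ∈ Finset.range n,
                ∑ b ∈ Finset.range (n+1), ((((a+1) + b : ℕ) : ℝ) ^ 2)⁻¹ ≤ 2 / ((a+1 : ℕ) : ℝ) := by
              intro a _
              exact inner_pos n (a+1) (by omega)
            calc ∑ a ∈ Finset.range n, ∑ b ∈ Finset.range (n+1), ((((a+1) + b : ℕ) : ℝ) ^ 2)⁻¹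
                ≤ ∑ a ∈ Finset.range n, 2 / ((a+1 : ℕ) : ℝ) := Finset.sum_le_sum h1
              _ = 2 * ∑ a ∈ Finset.range n, ((a+1 : ℕ) : ℝ)⁻¹ := by
                  rw [Finset.mul_sum]; exact Finset.sum_congr rfl fun a _ => by
                    rw [div_eq_mul_inv]
              _ = 2 * ∑ a ∈ Finset.Ico 1 (n+1), ((a : ℕ) : ℝ)⁻¹ := by
                  rw [Finset.sum_Ico_eq_sum_range]
                  simp [add_comm]
              _ ≤ 2 * (1 + Real.log n) := by
                  have := harmonic_sum n; linarith
              _ = 2 + 2 * Real.log n := by ring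
          linarith
        linarith

/-- for `n ≥ 3` and `k ≥ 1`, for any fixed vertex `u`, with probability at
least `1/2` the random normalization constant `z = Σ_{v ∈ H, v ≠ u} d(u,v)⁻²` satisfies
`z ≤ 10 + 37·(log₂ n)/k`. -/
theorem statement14 (n k : ℕ) (hn : 3 ≤ n) (hk : 1 ≤ k) (u : Fin n × Fin n) :
    highwayMeasure n k hk
      {ω | ∑ v ∈ (univ.erase u).filter (fun v => ω v = true),
            ((torusDist n u v : ℝ) ^ 2)⁻¹ ≤ 10 + 37 * Real.logb 2 n / k} ≥
      1 / 2 := by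
  classical
  set μ := highwayMeasure n k hk with hμdef
  have hprob : IsProbabilityMeasure μ := by
    rw [hμdef]; unfold highwayMeasure; infer_instance
  set t : ℝ := 10 + 37 * Real.logb 2 n / k with ht
  have hlogb0 : 0 ≤ Real.logb 2 n :=
    Real.logb_nonneg (by norm_num) (by exact_mod_cast hn.trans' (by norm_num))
  have htpos : 0 < t := by
    have : 0 ≤ 37 * Real.logb 2 n / k := by positivity
    rw [ht]; linarith
  set r : Fin n × Fin n → ℝ := fun v => ((torusDist n u v : ℝ) ^ 2)⁻¹ with hr
  have hr0 : ∀ v, 0 ≤ r v := fun v => by rw [hr]; positivity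
  set E := (univ.erase u : Finset (Fin n × Fin n)) with hE
  set f : ((Fin n × Fin n) → Bool) → ℝ≥0∞ :=
    fun ω => ∑ v ∈ E, if ω v = true then ENNReal.ofReal (r v) else 0 with hf
  have hvmeas : ∀ v : Fin n × Fin n,
      MeasurableSet {ω : (Fin n × Fin n) → Bool | ω v = true} := by
    intro v
    have : {ω : (Fin n × Fin n) → Bool | ω v = true}
        = (fun ω : (Fin n × Fin n) → Bool => ω v) ⁻¹' {true} := by
      ext ω; simp
    rw [this]
    exact (measurable_pi_apply v) (measurableSet_singleton true)
  have hfmeas : Measurable f := by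
    apply Finset.measurable_sum
    intro v _
    exact Measurable.ite (hvmeas v) measurable_const measurable_const
  -- probability that a given vertex is in H
  have hμv : ∀ v : Fin n × Fin n, μ {ω | ω v = true} = (k : ℝ≥0∞)⁻¹ := by
    intro v
    have hset : {ω : (Fin n × Fin n) → Bool | ω v = true}
        = Set.pi Set.univ (fun i => if i = v then ({true} : Set Bool) else Set.univ) := by
      ext ω
      simp only [Set.mem_setOf_eq, Set.mem_pi, Set.mem_univ, true_implies]
      constructor
      · intro h i
        by_cases hi : i = v
        · subst hi; simp [h]
        · simp [hi]
      · intro h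
        have := h v
        simpa using this
    rw [hμdef]; unfold highwayMeasure
    rw [hset, MeasureTheory.Measure.pi_pi (μ := fun _ : Fin n × Fin n =>
      (PMF.bernoulli (k : ℝ≥0)⁻¹ (inv_le_one_of_one_le₀ (by exact_mod_cast hk))).toMeasure)]
    have hfac : ∀ i : Fin n × Fin n,
        (PMF.bernoulli (k : ℝ≥0)⁻¹ (inv_le_one_of_one_le₀ (by exact_mod_cast hk))).toMeasure
          (if i = v then ({true} : Set Bool) else Set.univ)
        = if i = v then (k : ℝ≥0∞)⁻¹ else 1 := by
      intro i
      split_ifs with hi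
      · rw [PMF.toMeasure_apply_singleton _ _ (measurableSet_singleton true)]
        simp [PMF.bernoulli_apply]
        exact ENNReal.coe_inv (by exact_mod_cast (show k ≠ 0 by omega))
      · exact measure_univ
    rw [Finset.prod_congr rfl (fun i _ => hfac i), Finset.prod_ite_eq']
    simp
  -- expectation of f
  have hint : ∫⁻ ω, f ω ∂μ = (∑ v ∈ E, ENNReal.ofReal (r v)) * (k : ℝ≥0∞)⁻¹ := by
    rw [hf]
    rw [MeasureTheory.lintegral_finset_sum _
      (fun v _ => Measurable.ite (hvmeas v) measurable_const measurable_const), Finset.sum_mul]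
    refine Finset.sum_congr rfl fun v _ => ?_
    have hind : (fun ω : (Fin n × Fin n) → Bool =>
        if ω v = true then ENNReal.ofReal (r v) else 0)
        = Set.indicator {ω | ω v = true} (fun _ => ENNReal.ofReal (r v)) := by
      ext ω; simp [Set.indicator_apply]
    rw [hind, MeasureTheory.lintegral_indicator_const (hvmeas v), hμv v]
  -- expectation as ofReal
  set S : ℝ := ∑ v ∈ E, r v with hS
  have hS0 : 0 ≤ S := Finset.sum_nonneg fun v _ => hr0 v
  have hkpos : (0:ℝ) < (k:ℝ) := by exact_mod_cast hk
  have hEk : ∫⁻ ω, f ω ∂μ = ENNReal.ofReal (S / k) := by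
    rw [hint, hS, ENNReal.ofReal_sum_of_nonneg (fun v _ => hr0 v) |>.symm,
      ENNReal.ofReal_div_of_pos hkpos, ENNReal.ofReal_natCast, div_eq_mul_inv]
  -- the real inequality
  have hL1 : 1 ≤ Real.log n := by
    rw [Real.le_log_iff_exp_le (by positivity)]
    have h3 : (3:ℝ) ≤ (n:ℝ) := by exact_mod_cast hn
    have := Real.exp_one_lt_d9
    linarith
  have hSbound : S ≤ 16 + 8 * Real.log n := sum_invSq_le n (by omega) u
  have hlog2pos : 0 < Real.log 2 := Real.log_pos (by norm_num)
  have hlog2hi : Real.log 2 < 0.6931471808 := Real.log_two_lt_d9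
  have hkR : (1:ℝ) ≤ (k:ℝ) := by exact_mod_cast hk
  have hreal : S / k ≤ t / 2 := by
    have hlogb : Real.logb 2 n = Real.log n / Real.log 2 := rfl
    have key : 11 + 8 * Real.log n ≤ (37/2) * Real.log n / Real.log 2 := by
      rw [le_div_iff₀ hlog2pos]
      nlinarith [mul_nonneg (by linarith : (0:ℝ) ≤ Real.log n)
        (by linarith : (0:ℝ) ≤ 0.6931471808 - Real.log 2)]
    have hnum : S ≤ 5 * k + (37/2) * Real.logb 2 n := by
      rw [hlogb]
      have heq : (37/2) * (Real.log n / Real.log 2) = (37/2) * Real.log n / Real.log 2 := by ring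
      rw [heq]
      linarith
    have step1 : S / k ≤ (5 * k + (37/2) * Real.logb 2 n) / k := by gcongr
    have step2 : (5 * (k:ℝ) + (37/2) * Real.logb 2 n) / k = t / 2 := by
      rw [ht]; field_simp; ring
    linarith
  -- Markov
  set ε := ENNReal.ofReal t with hε
  have hε0 : ε ≠ 0 := by rw [hε]; exact (ENNReal.ofReal_pos.mpr htpos).ne'
  have hεtop : ε ≠ ⊤ := ENNReal.ofReal_ne_top
  have markov : μ {ω | ε ≤ f ω} ≤ (∫⁻ ω, f ω ∂μ) / ε :=
    MeasureTheory.meas_ge_le_lintegral_div hfmeas.aemeasurable hε0 hεtop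
  have hhalf : (∫⁻ ω, f ω ∂μ) / ε ≤ 1/2 := by
    apply ENNReal.div_le_of_le_mul
    rw [hEk, hε]
    calc ENNReal.ofReal (S/k) ≤ ENNReal.ofReal (t/2) := ENNReal.ofReal_le_ofReal hreal
      _ = 1/2 * ENNReal.ofReal t := by
          rw [ENNReal.ofReal_div_of_pos (by norm_num : (0:ℝ) < 2),
            div_eq_mul_inv, mul_comm, ENNReal.ofReal_ofNat, one_div]
  -- the target set
  set X : Set ((Fin n × Fin n) → Bool) :=
    {ω | ∑ v ∈ E.filter (fun v => ω v = true), r v ≤ t} with hX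
  have hXmeas : MeasurableSet X := by
    rw [hX]
    apply measurableSet_le _ measurable_const
    have hfun : (fun ω : (Fin n × Fin n) → Bool => ∑ v ∈ E.filter (fun v => ω v = true), r v)
        = fun ω => ∑ v ∈ E, if ω v = true then r v else 0 := by
      funext ω; rw [Finset.sum_filter]
    rw [hfun]
    exact Finset.measurable_sum _ fun v _ =>
      Measurable.ite (hvmeas v) measurable_const measurable_const
  have hsub : Xᶜ ⊆ {ω | ε ≤ f ω} := by
    intro ω hω
    simp only [hX, Set.mem_compl_iff, Set.mem_setOf_eq, not_le] at hω
    have hfω : f ω = ENNReal.ofReal (∑ v ∈ E.filter (fun v => ω v = true), r v) := by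
      rw [hf, ENNReal.ofReal_sum_of_nonneg (fun v _ => hr0 v), Finset.sum_filter]
    simp only [Set.mem_setOf_eq, hfω, hε]
    exact ENNReal.ofReal_le_ofReal hω.le
  have h1 : μ Xᶜ ≤ 1/2 := (measure_mono hsub).trans (markov.trans hhalf)
  have h2 : μ X = 1 - μ Xᶜ := by
    have := MeasureTheory.prob_compl_eq_one_sub (μ := μ) hXmeas.compl
    rwa [compl_compl] at this
  have hhalf1 : (1:ℝ≥0∞) - 1/2 = 1/2 := by
    rw [one_div]; exact ENNReal.one_sub_inv_two
  show μ X ≥ 1/2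
  rw [h2, ← hhalf1]
  exact tsub_le_tsub_left h1 1
end

section
/- Let n ≥ 6 and k ≥ 1 be integers. Let each of the n² vertices of the n×n torus grid be included in a random set H independently with probability 1/k, and fix a vertex u. Then with probability at least 1 − (log₂ n)^{−1.89}, the random normalization constant z = Σ_{v ∈ H, v ≠ u} d(u,v)^{−2} satisfies z ≤ 25·log₂(log₂(log₂ n)) + (41/9)·(log₂ n)/(k·log₂(log₂ n)) + 26·(log₂ n)/k. -/
open Finset MeasureTheory
open scoped ENNReal NNReal

set_option linter.unusedVariables false
set_option linter.dupNamespace false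

namespace St15

def theta (n : ℕ) (x y : Fin n) : ℤ :=
  if 2 * (x - y).val ≤ n then ((x - y).val : ℤ) else ((x - y).val : ℤ) - n

lemma sub_val (n : ℕ) (x y : Fin n) : (x - y).val = (x.val + n - y.val) % n := by
  have := y.isLt
  rw [Fin.sub_def]
  simp only []
  congr 1
  omega

lemma natAbs_theta (n : ℕ) (x y : Fin n) :
    (theta n x y).natAbs = min ((x - y).val) (n - (x - y).val) := by
  have h := (x - y).isLt
  unfold theta
  split <;> omega

lemma theta_inj (n : ℕ) [NeZero n] (x y z : Fin n) (h : theta n x y = theta n x z) : y = z := by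
  have h1 := (x - y).isLt
  have h2 := (x - z).isLt
  have : (x - y).val = (x - z).val := by
    unfold theta at h
    split at h <;> split at h <;> omega
  have : x - y = x - z := Fin.ext this
  exact sub_right_inj.mp this

lemma theta_eq_zero (n : ℕ) [NeZero n] (x y : Fin n) (h : theta n x y = 0) : x = y := by
  have h1 := (x - y).isLt
  have : (x - y).val = 0 := by
    unfold theta at h
    split at h <;> omega
  exact sub_eq_zero.mp (Fin.ext this : x - y = 0)

lemma torusDist_eq (n : ℕ) (u v : Fin n × Fin n) :
    torusDist n u v = (theta n u.1 v.1).natAbs + (theta n u.2 v.2).natAbs := by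
  rw [natAbs_theta, natAbs_theta, torusDist, sub_val, sub_val]


def sqmap (p : ℤ × ℤ) : ℕ × ℕ :=
  if 0 < p.1 ∧ 0 ≤ p.2 then (0, (p.1 - 1).toNat)
  else if p.1 ≤ 0 ∧ 0 < p.2 then (1, (p.2 - 1).toNat)
  else if p.1 < 0 ∧ p.2 ≤ 0 then (2, (-p.1 - 1).toNat)
  else (3, (-p.2 - 1).toNat)

lemma sphere_card (n s : ℕ) (hs : 1 ≤ s) :
    ((((Finset.Icc (-(n:ℤ)) n) ×ˢ (Finset.Icc (-(n:ℤ)) n)).erase (0,0)).filter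
      (fun p => p.1.natAbs + p.2.natAbs = s)).card ≤ 4 * s := by
  have h4s : 4 * s = ((Finset.range 4) ×ˢ (Finset.range s)).card := by simp [mul_comm]
  rw [h4s]
  apply Finset.card_le_card_of_injOn sqmap
  · rintro ⟨a, b⟩ hp
    simp only [Finset.coe_filter, Set.mem_setOf_eq, Finset.mem_erase, Finset.mem_product,
      Finset.mem_Icc, Prod.mk.injEq] at hp
    obtain ⟨⟨hne, _⟩, habs⟩ := hp
    simp only [sqmap]
    split_ifs <;> simp only [Finset.mem_coe, Finset.mem_product, Finset.mem_range] <;> omega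
  · rintro ⟨a, b⟩ hp ⟨c, d⟩ hq hpq
    simp only [Finset.coe_filter, Set.mem_setOf_eq, Finset.mem_erase, Finset.mem_product,
      Finset.mem_Icc, Prod.mk.injEq] at hp hq
    obtain ⟨⟨hne1, _⟩, habs1⟩ := hp
    obtain ⟨⟨hne2, _⟩, habs2⟩ := hq
    simp only [sqmap] at hpq
    split_ifs at hpq <;> rw [Prod.mk.injEq] at hpq ⊢ <;>
      omega

lemma theta_abs_le (n : ℕ) (x y : Fin n) : (theta n x y).natAbs ≤ n := by
  have h := (x - y).isLt
  rw [natAbs_theta]; omega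

lemma sum_dist_bound (n : ℕ) [NeZero n] (u : Fin n × Fin n) (F : ℕ → ℝ)
    (hF : ∀ s, 0 ≤ F s) :
    ∑ v ∈ Finset.univ.erase u, F (torusDist n u v) ≤
      ∑ s ∈ Finset.Icc 1 (2*n), (4*s : ℝ) * F s := by
  classical
  set P : Finset (ℤ × ℤ) := ((Finset.Icc (-(n:ℤ)) n) ×ˢ (Finset.Icc (-(n:ℤ)) n)).erase (0,0)
    with hP
  set ι : (Fin n × Fin n) → ℤ × ℤ := fun v => (theta n u.1 v.1, theta n u.2 v.2) with hι
  have hinj : ∀ v ∈ Finset.univ.erase u, ∀ w ∈ Finset.univ.erase u, ι v = ι w → v = w := by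
    intro v _ w _ h
    rw [hι, Prod.mk.injEq] at h
    exact Prod.ext (theta_inj n u.1 v.1 w.1 h.1) (theta_inj n u.2 v.2 w.2 h.2)
  have himg : ∀ v ∈ Finset.univ.erase u, ι v ∈ P := by
    intro v hv
    rw [Finset.mem_erase] at hv
    have h1 := theta_abs_le n u.1 v.1
    have h2 := theta_abs_le n u.2 v.2
    simp only [hι, hP, Finset.mem_erase, Finset.mem_product, Finset.mem_Icc, Prod.mk.injEq]
    refine ⟨?_, by omega, by omega⟩
    intro g
    have g1 := congrArg Prod.fst g
    have g2 := congrArg Prod.snd g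
    simp only at g1 g2
    exact hv.1 (Prod.ext (theta_eq_zero n u.1 v.1 g1) (theta_eq_zero n u.2 v.2 g2)).symm
  have hmaps : ∀ p ∈ P, p.1.natAbs + p.2.natAbs ∈ Finset.Icc 1 (2*n) := by
    rintro ⟨a, b⟩ hp
    rw [hP, Finset.mem_erase, Finset.mem_product, Finset.mem_Icc, Finset.mem_Icc] at hp
    obtain ⟨hne, ⟨ha1, ha2⟩, hb1, hb2⟩ := hp
    have hne' : ¬(a = 0 ∧ b = 0) := fun ⟨x, y⟩ => hne (by simp [x, y])
    rw [Finset.mem_Icc]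
    dsimp only at *
    omega
  calc ∑ v ∈ Finset.univ.erase u, F (torusDist n u v)
      = ∑ v ∈ Finset.univ.erase u, F ((ι v).1.natAbs + (ι v).2.natAbs) := by
        exact Finset.sum_congr rfl fun v _ => by rw [torusDist_eq n u v, hι]
    _ = ∑ p ∈ (Finset.univ.erase u).image ι, F (p.1.natAbs + p.2.natAbs) :=
        (Finset.sum_image (f := fun p => F (p.1.natAbs + p.2.natAbs)) hinj).symm
    _ ≤ ∑ p ∈ P, F (p.1.natAbs + p.2.natAbs) := by
        apply Finset.sum_le_sum_of_subset_of_nonneg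
        · exact Finset.image_subset_iff.mpr himg
        · exact fun p _ _ => hF _
    _ = ∑ s ∈ Finset.Icc 1 (2*n), ∑ p ∈ P.filter (fun p => p.1.natAbs + p.2.natAbs = s),
          F (p.1.natAbs + p.2.natAbs) := (Finset.sum_fiberwise_of_maps_to hmaps _).symm
    _ ≤ ∑ s ∈ Finset.Icc 1 (2*n), (4*s : ℝ) * F s := by
        apply Finset.sum_le_sum
        intro s hs
        rw [Finset.mem_Icc] at hs
        have hcard := sphere_card n s hs.1
        calc ∑ p ∈ P.filter (fun p => p.1.natAbs + p.2.natAbs = s), F (p.1.natAbs + p.2.natAbs)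
            = ∑ p ∈ P.filter (fun p => p.1.natAbs + p.2.natAbs = s), F s := by
              exact Finset.sum_congr rfl fun p hp => by rw [(Finset.mem_filter.mp hp).2]
          _ = ((P.filter (fun p => p.1.natAbs + p.2.natAbs = s)).card : ℝ) * F s := by
              rw [Finset.sum_const, nsmul_eq_mul]
          _ ≤ (4*s : ℝ) * F s := by
              apply mul_le_mul_of_nonneg_right _ (hF s)
              exact_mod_cast hcard

lemma gauss_sum (m : ℕ) : (∑ s ∈ Finset.Icc 1 m, (s:ℝ)) * 2 = m * (m+1) := by
  induction m with
  | zero => simp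
  | succ m ih =>
    rw [Finset.sum_Icc_succ_top (by omega)]
    push_cast
    push_cast at ih
    nlinarith [ih]

lemma harmonic_bound (N : ℕ) (hN : 1 ≤ N) :
    ∑ s ∈ Finset.Icc 1 N, ((s:ℝ))⁻¹ ≤ 1 + Real.log N := by
  have h1 : (harmonic N : ℝ) = ∑ s ∈ Finset.Icc 1 N, ((s:ℝ))⁻¹ := by
    rw [harmonic_eq_sum_Icc]
    push_cast
    rfl
  rw [← h1]
  exact harmonic_le_one_add_log N

lemma exp_sub_one_le {x : ℝ} (h0 : 0 ≤ x) (h1 : x ≤ 1) :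
    Real.exp x - 1 ≤ (Real.exp 1 - 1) * x := by
  have := convexOn_exp.2 (Set.mem_univ (0:ℝ)) (Set.mem_univ (1:ℝ))
    (by linarith : (0:ℝ) ≤ 1 - x) h0 (by ring)
  simp only [smul_eq_mul, mul_zero, mul_one, add_zero, zero_add, Real.exp_zero] at this
  nlinarith [this]

lemma logb_ge (x : ℝ) (p q : ℕ) (hq : 0 < q) (h : (2:ℝ)^p ≤ x^q) :
    (p : ℝ)/q ≤ Real.logb 2 x := by
  have hlog : (p : ℝ) * Real.log 2 ≤ q * Real.log x := by
    have := Real.log_le_log (by positivity) h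
    rwa [Real.log_pow, Real.log_pow] at this
  have hq' : (0:ℝ) < q := by exact_mod_cast hq
  rw [Real.logb, le_div_iff₀ (Real.log_pos (by norm_num)), div_mul_eq_mul_div,
    div_le_iff₀ hq']
  linarith

lemma L_ge (n : ℕ) (hn : 6 ≤ n) : (2.58 : ℝ) ≤ Real.logb 2 n := by
  have h6 : (2.58 : ℝ) ≤ Real.logb 2 6 := by
    have := logb_ge 6 129 50 (by norm_num) (by norm_num)
    norm_num at this ⊢
    linarith
  refine h6.trans (Real.logb_le_logb_of_le (by norm_num) (by norm_num) ?_)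
  exact_mod_cast hn

lemma L2_ge (n : ℕ) (hn : 6 ≤ n) : (1.36 : ℝ) ≤ Real.logb 2 (Real.logb 2 n) := by
  have h1 : (1.36 : ℝ) ≤ Real.logb 2 (2.58 : ℝ) := by
    have := logb_ge 2.58 34 25 (by norm_num) (by norm_num)
    norm_num at this ⊢
    linarith
  refine h1.trans (Real.logb_le_logb_of_le (by norm_num) (by norm_num) (L_ge n hn))

lemma L3_ge (n : ℕ) (hn : 6 ≤ n) :
    (0.44 : ℝ) ≤ Real.logb 2 (Real.logb 2 (Real.logb 2 n)) := by
  have h1 : (0.44 : ℝ) ≤ Real.logb 2 (1.36 : ℝ) := by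
    have := logb_ge 1.36 11 25 (by norm_num) (by norm_num)
    norm_num at this ⊢
    linarith
  refine h1.trans (Real.logb_le_logb_of_le (by norm_num) (by norm_num) (L2_ge n hn))

set_option maxHeartbeats 2000000 in
lemma sum_exp_bound (n : ℕ) [NeZero n] (hn : 6 ≤ n) (u : Fin n × Fin n) (lam : ℝ)
    (hlam : 1 ≤ lam)
    (hexp : Real.exp lam ≤ Real.exp 1 * Real.exp (Real.log (Real.logb 2 n) / 2)) :
    ∑ v ∈ Finset.univ.erase u, (Real.exp (lam * ((torusDist n u v : ℝ)^2)⁻¹) - 1)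
      ≤ 26 * lam * Real.logb 2 n := by
  have hlam0 : (0:ℝ) < lam := by linarith
  have hL : (2.58:ℝ) ≤ Real.logb 2 n := L_ge n hn
  set L := Real.logb 2 n with hLdef
  set E := Real.exp (Real.log L / 2) with hEdef
  have hE2 : E * E = L := by
    rw [hEdef, ← Real.exp_add, show Real.log L / 2 + Real.log L / 2 = Real.log L by ring]
    exact Real.exp_log (by linarith)
  have hE0 : (0:ℝ) < E := Real.exp_pos _
  have hE16 : (1.6:ℝ) ≤ E := by nlinarith
  have he1 := Real.exp_one_lt_d9
  have he1' := Real.exp_one_gt_d9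
  have hl2 := Real.log_two_lt_d9
  have hl2' := Real.log_two_gt_d9
  have hF : ∀ s : ℕ, 0 ≤ Real.exp (lam * ((s:ℝ)^2)⁻¹) - 1 := by
    intro s
    have h0 : 0 ≤ lam * ((s:ℝ)^2)⁻¹ := by positivity
    have := Real.one_le_exp h0
    linarith
  have step1 : (∑ v ∈ Finset.univ.erase u, (Real.exp (lam * ((torusDist n u v : ℝ)^2)⁻¹) - 1))
      ≤ ∑ s ∈ Finset.Icc 1 (2*n), (4*(s:ℝ)) * (Real.exp (lam * ((s:ℝ)^2)⁻¹) - 1) :=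
    sum_dist_bound n u (fun s => Real.exp (lam * ((s:ℝ)^2)⁻¹) - 1) hF
  refine step1.trans ?_
  have hpoint : ∀ s ∈ Finset.Icc 1 (2*n),
      (4*(s:ℝ)) * (Real.exp (lam * ((s:ℝ)^2)⁻¹) - 1) ≤
      (4*(s:ℝ)) * (if (s:ℝ)^2 ≤ lam then Real.exp lam else 0)
        + (4*(s:ℝ)) * ((Real.exp 1 - 1) * (lam * ((s:ℝ)^2)⁻¹)) := by
    intro s hs
    rw [Finset.mem_Icc] at hs
    have hs1 : (1:ℝ) ≤ (s:ℝ) := by exact_mod_cast hs.1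
    have hs2 : (1:ℝ) ≤ (s:ℝ)^2 := by nlinarith
    have hs2p : (0:ℝ) < (s:ℝ)^2 := by linarith
    have hcan : ((s:ℝ)^2)⁻¹ * (s:ℝ)^2 = 1 := inv_mul_cancel₀ (ne_of_gt hs2p)
    have hinv0 : 0 ≤ ((s:ℝ)^2)⁻¹ := by positivity
    rw [← mul_add]
    apply mul_le_mul_of_nonneg_left _ (by positivity)
    split_ifs with hcase
    · have h1 : lam * ((s:ℝ)^2)⁻¹ ≤ lam := by nlinarith
      have h2 := Real.exp_le_exp.mpr h1
      have hg2 : 0 ≤ (Real.exp 1 - 1) * (lam * ((s:ℝ)^2)⁻¹) := by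
        apply mul_nonneg _ (by positivity)
        linarith
      linarith
    · push_neg at hcase
      have hx1 : lam * ((s:ℝ)^2)⁻¹ ≤ 1 := by nlinarith
      have hx0 : 0 ≤ lam * ((s:ℝ)^2)⁻¹ := by positivity
      have := exp_sub_one_le hx0 hx1
      linarith
  refine (Finset.sum_le_sum hpoint).trans ?_
  rw [Finset.sum_add_distrib]
  -- G1 part
  have hG1 : ∑ s ∈ Finset.Icc 1 (2*n),
      (4*(s:ℝ)) * (if (s:ℝ)^2 ≤ lam then Real.exp lam else 0) ≤ 4 * lam * Real.exp lam := by
    have hrw : ∀ s ∈ Finset.Icc 1 (2*n),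
        (4*(s:ℝ)) * (if (s:ℝ)^2 ≤ lam then Real.exp lam else 0)
        = (if (s:ℝ)^2 ≤ lam then 4*(s:ℝ) * Real.exp lam else 0) := by
      intro s _
      split_ifs <;> ring
    rw [Finset.sum_congr rfl hrw, ← Finset.sum_filter]
    set m := Nat.floor (Real.sqrt lam) with hm
    have hsub : (Finset.Icc 1 (2*n)).filter (fun s : ℕ => ((s:ℝ))^2 ≤ lam) ⊆ Finset.Icc 1 m := by
      intro s hs
      rw [Finset.mem_filter, Finset.mem_Icc] at hs
      rw [Finset.mem_Icc]
      refine ⟨hs.1.1, Nat.le_floor ?_⟩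
      exact (Real.le_sqrt (by positivity) (by linarith)).mpr hs.2
    have hstep : ∑ s ∈ (Finset.Icc 1 (2*n)).filter (fun s : ℕ => ((s:ℝ))^2 ≤ lam),
        (4*(s:ℝ) * Real.exp lam) ≤ ∑ s ∈ Finset.Icc 1 m, (4*(s:ℝ) * Real.exp lam) := by
      apply Finset.sum_le_sum_of_subset_of_nonneg hsub
      intro s _ _
      positivity
    refine hstep.trans ?_
    have hgauss := gauss_sum m
    have hmle : (m:ℝ) ≤ Real.sqrt lam := Nat.floor_le (Real.sqrt_nonneg _)
    have hsq : Real.sqrt lam * Real.sqrt lam = lam := Real.mul_self_sqrt hlam0.le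
    have hsl : Real.sqrt lam ≤ lam := by nlinarith [Real.sqrt_nonneg lam]
    have hsum_le : (∑ s ∈ Finset.Icc 1 m, (s:ℝ)) ≤ lam := by
      nlinarith [Real.sqrt_nonneg lam]
    have : ∑ s ∈ Finset.Icc 1 m, (4*(s:ℝ) * Real.exp lam)
        = (∑ s ∈ Finset.Icc 1 m, (s:ℝ)) * (4 * Real.exp lam) := by
      rw [Finset.sum_mul]
      apply Finset.sum_congr rfl
      intro s _
      ring
    rw [this]
    have := Real.exp_pos lam
    nlinarith
  -- G2 part
  have hG2 : ∑ s ∈ Finset.Icc 1 (2*n),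
      (4*(s:ℝ)) * ((Real.exp 1 - 1) * (lam * ((s:ℝ)^2)⁻¹))
      ≤ 4 * (Real.exp 1 - 1) * lam * (1 + Real.log (2*n)) := by
    have hrw : ∀ s ∈ Finset.Icc 1 (2*n),
        (4*(s:ℝ)) * ((Real.exp 1 - 1) * (lam * ((s:ℝ)^2)⁻¹))
        = (4 * (Real.exp 1 - 1) * lam) * ((s:ℝ))⁻¹ := by
      intro s hs
      rw [Finset.mem_Icc] at hs
      have hs0 : (s:ℝ) ≠ 0 := by
        have : (1:ℝ) ≤ (s:ℝ) := by exact_mod_cast hs.1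
        linarith
      field_simp
    rw [Finset.sum_congr rfl hrw, ← Finset.mul_sum]
    have hharm := harmonic_bound (2*n) (by omega)
    have hcast : Real.log ((2*n : ℕ) : ℝ) = Real.log (2*n) := by push_cast; rfl
    rw [hcast] at hharm
    apply mul_le_mul_of_nonneg_left hharm
    have : (1:ℝ) ≤ Real.exp 1 := Real.one_le_exp zero_le_one
    nlinarith
  refine (add_le_add hG1 hG2).trans ?_
  -- final numeric inequality
  have hlogn : Real.log n = L * Real.log 2 := by
    rw [hLdef, Real.logb]
    field_simp
  have hlog2n : Real.log (2*n) = Real.log 2 + L * Real.log 2 := by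
    rw [Real.log_mul (by norm_num) (by positivity), hlogn]
  rw [hlog2n]
  have hexpE : Real.exp lam ≤ 2.7182818286 * E := by
    refine hexp.trans ?_
    apply mul_le_mul_of_nonneg_right he1.le hE0.le
  have key : 4 * (2.7182818286 * E) + 4 * 1.7182818286 * (1.6931471808 + 0.6931471808 * L)
      ≤ 26 * L := by
    rw [← hE2]
    nlinarith [hE16, sq_nonneg (E - 1.6)]
  have hmono1 : 4 * lam * Real.exp lam ≤ lam * (4 * (2.7182818286 * E)) := by
    have h := mul_le_mul_of_nonneg_left hexpE (by positivity : (0:ℝ) ≤ 4 * lam)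
    nlinarith [h]
  have hmono2 : 4 * (Real.exp 1 - 1) * lam * (1 + (Real.log 2 + L * Real.log 2))
      ≤ lam * (4 * 1.7182818286 * (1.6931471808 + 0.6931471808 * L)) := by
    have hLpos : (0:ℝ) < L := by linarith
    have hX : 1 + (Real.log 2 + L * Real.log 2) ≤ 1.6931471808 + 0.6931471808 * L := by
      have := mul_le_mul_of_nonneg_left hl2.le hLpos.le
      linarith
    have hXpos : (0:ℝ) ≤ 1 + (Real.log 2 + L * Real.log 2) := by nlinarith [hl2', hLpos]
    have hE1 : Real.exp 1 - 1 ≤ 1.7182818286 := by linarith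
    have hE1' : (0:ℝ) ≤ Real.exp 1 - 1 := by linarith
    have := mul_le_mul hE1 hX hXpos (by norm_num)
    nlinarith [this, hlam0.le, mul_le_mul_of_nonneg_left this (by positivity : (0:ℝ) ≤ 4 * lam)]
  calc 4 * lam * Real.exp lam + 4 * (Real.exp 1 - 1) * lam * (1 + (Real.log 2 + L * Real.log 2))
      ≤ lam * (4 * (2.7182818286 * E)) + lam * (4 * 1.7182818286 * (1.6931471808 + 0.6931471808 * L)) := add_le_add hmono1 hmono2
    _ = lam * (4 * (2.7182818286 * E) + 4 * 1.7182818286 * (1.6931471808 + 0.6931471808 * L)) := by ring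
    _ ≤ lam * (26 * L) := mul_le_mul_of_nonneg_left key hlam0.le
    _ = 26 * lam * L := by ring


end St15


open St15

set_option maxHeartbeats 2000000

/-- for `n ≥ 6` and `k ≥ 1`, for any fixed vertex `u`, with probability at
least `1 − (log₂ n)^{−1.89}` the random normalization constant
`z = Σ_{v ∈ H, v ≠ u} d(u,v)⁻²` satisfies
`z ≤ 25·log₂ log₂ log₂ n + (41/9)·(log₂ n)/(k·log₂ log₂ n) + 26·(log₂ n)/k`. -/
theorem statement15 (n k : ℕ) (hn : 6 ≤ n) (hk : 1 ≤ k) (u : Fin n × Fin n) :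
    highwayMeasure n k hk
      {ω | ∑ v ∈ (univ.erase u).filter (fun v => ω v = true),
            ((torusDist n u v : ℝ) ^ 2)⁻¹ ≤
          25 * Real.logb 2 (Real.logb 2 (Real.logb 2 n)) +
            (41 / 9) * Real.logb 2 n / (k * Real.logb 2 (Real.logb 2 n)) +
            26 * Real.logb 2 n / k} ≥
      ENNReal.ofReal (1 - (Real.logb 2 n) ^ (-(1.89 : ℝ))) := by
  classical
  haveI : NeZero n := ⟨by omega⟩
  -- basic objects
  set ν : Measure Bool :=
    (PMF.bernoulli (k : ℝ≥0)⁻¹ (inv_le_one_of_one_le₀ (by exact_mod_cast hk))).toMeasure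
    with hν
  have hμ : highwayMeasure n k hk = Measure.pi (fun _ : Fin n × Fin n => ν) := rfl
  haveI hprobν : IsProbabilityMeasure ν := PMF.toMeasure.isProbabilityMeasure _
  haveI : IsProbabilityMeasure (highwayMeasure n k hk) := by
    rw [hμ]; infer_instance
  set μ := highwayMeasure n k hk with hμdef
  -- real quantities
  set L : ℝ := Real.logb 2 n with hL
  set L2 : ℝ := Real.logb 2 L with hL2
  set L3 : ℝ := Real.logb 2 L2 with hL3
  have hLb : (2.58:ℝ) ≤ L := L_ge n hn
  have hL2b : (1.36:ℝ) ≤ L2 := L2_ge n hn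
  have hL3b : (0.44:ℝ) ≤ L3 := L3_ge n hn
  have hkR : (1:ℝ) ≤ (k:ℝ) := by exact_mod_cast hk
  have hkR0 : (0:ℝ) < (k:ℝ) := by linarith
  set lam : ℝ := (21/400) * L2 / L3 + 1 with hlamdef
  have hlam1 : (1:ℝ) ≤ lam := by
    rw [hlamdef]
    have : 0 ≤ (21:ℝ)/400 * L2 / L3 := by positivity
    linarith
  have hlam0 : (0:ℝ) < lam := by linarith
  have hl2 := Real.log_two_lt_d9
  have hl2' := Real.log_two_gt_d9
  have hlogL : Real.log L = L2 * Real.log 2 := by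
    rw [hL2, Real.logb]
    field_simp
  have hlam_le : lam ≤ 1 + Real.log L / 2 := by
    rw [hlamdef, hlogL]
    have h1 : (21/400) * L2 / L3 ≤ (21/400) * L2 / 0.44 := by
      apply div_le_div_of_nonneg_left (by positivity) (by norm_num) hL3b
    have h2 : (21/400) * L2 / 0.44 ≤ L2 * Real.log 2 / 2 := by
      rw [div_le_div_iff₀ (by norm_num) (by norm_num)]
      nlinarith
    linarith
  set w : (Fin n × Fin n) → ℝ := fun v => ((torusDist n u v : ℝ) ^ 2)⁻¹ with hw
  set Z : ((Fin n × Fin n) → Bool) → ℝ :=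
    fun ω => ∑ v ∈ (univ.erase u).filter (fun v => ω v = true), w v with hZ
  set T : ℝ := 25 * L3 + (41 / 9) * L / (k * L2) + 26 * L / k with hT
  -- the sum bound
  have hS : ∑ v ∈ Finset.univ.erase u, (Real.exp (lam * w v) - 1) ≤ 26 * lam * L := by
    have hexp : Real.exp lam ≤ Real.exp 1 * Real.exp (Real.log L / 2) := by
      rw [← Real.exp_add]
      exact Real.exp_le_exp.mpr hlam_le
    exact sum_exp_bound n hn u lam hlam1 hexp
  -- Chernoff bound
  have hint : Integrable (fun ω => Real.exp (lam * Z ω)) μ := .of_finite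
  have hcher := ProbabilityTheory.measure_ge_le_exp_mul_mgf (X := Z) (μ := μ) (t := lam)
    T hlam0.le hint
  -- compute/bound the mgf
  have hwnn : ∀ v, 0 ≤ w v := by
    intro v
    rw [hw]
    positivity
  have hmgf : ProbabilityTheory.mgf Z μ lam ≤
      Real.exp ((k:ℝ)⁻¹ * ∑ v ∈ Finset.univ.erase u, (Real.exp (lam * w v) - 1)) := by
    letI : MeasureSpace Bool := ⟨ν⟩
    set H : (Fin n × Fin n) → Bool → ℝ :=
      fun v b => if v = u then 1 else Real.exp (lam * (if b = true then w v else 0)) with hH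
    have hZrw : ∀ ω, Real.exp (lam * Z ω) = ∏ v : Fin n × Fin n, H v (ω v) := by
      intro ω
      have h1 : Z ω = ∑ v ∈ univ.erase u, (if ω v = true then w v else 0) := by
        rw [hZ]
        exact Finset.sum_filter _ _
      rw [h1, Finset.mul_sum, Real.exp_sum,
        ← Finset.mul_prod_erase Finset.univ (fun v => H v (ω v)) (Finset.mem_univ u)]
      have hu : H u (ω u) = 1 := if_pos rfl
      rw [hu, one_mul]
      apply Finset.prod_congr rfl
      intro v hv
      rw [Finset.mem_erase] at hv
      rw [hH]
      simp only [if_neg hv.1]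
    have hmgf_eq : ProbabilityTheory.mgf Z μ lam = ∏ v : Fin n × Fin n, ∫ b, H v b ∂ν := by
      unfold ProbabilityTheory.mgf
      rw [show (fun ω => Real.exp (lam * Z ω)) = fun ω => ∏ v, H v (ω v) from funext hZrw]
      exact MeasureTheory.integral_fintype_prod_eq_prod (𝕜 := ℝ) H
    have hEv : ∀ v : Fin n × Fin n, ∫ b, H v b ∂ν
        = (1 - (k:ℝ)⁻¹) * H v false + (k:ℝ)⁻¹ * H v true := by
      intro v
      rw [MeasureTheory.integral_fintype (Integrable.of_finite), Fintype.sum_bool]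
      have ht : ν {true} = (((k:ℝ≥0)⁻¹ : ℝ≥0) : ℝ≥0∞) := by
        rw [hν, PMF.toMeasure_apply_singleton _ _ (measurableSet_singleton _)]
        rfl
      have hf : ν {false} = ((1 - (k:ℝ≥0)⁻¹ : ℝ≥0) : ℝ≥0∞) := by
        rw [hν, PMF.toMeasure_apply_singleton _ _ (measurableSet_singleton _)]
        rfl
      have hle : ((k:ℝ≥0))⁻¹ ≤ 1 := inv_le_one_of_one_le₀ (by exact_mod_cast hk)
      rw [measureReal_def, measureReal_def, ht, hf, ENNReal.coe_toReal, ENNReal.coe_toReal,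
        NNReal.coe_sub hle, NNReal.coe_one, NNReal.coe_inv, NNReal.coe_natCast,
        smul_eq_mul, smul_eq_mul]
      ring
    rw [hmgf_eq]
    have hprod : ∏ v : Fin n × Fin n, ∫ b, H v b ∂ν
        = ∏ v ∈ Finset.univ.erase u, (1 + (k:ℝ)⁻¹ * (Real.exp (lam * w v) - 1)) := by
      rw [← Finset.mul_prod_erase Finset.univ _ (Finset.mem_univ u)]
      have hu1 : ∫ b, H u b ∂ν = 1 := by
        rw [hEv u]
        have : ∀ b, H u b = 1 := fun b => if_pos rfl
        rw [this, this]
        ring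
      rw [hu1, one_mul]
      apply Finset.prod_congr rfl
      intro v hv
      rw [Finset.mem_erase] at hv
      rw [hEv v]
      have hHf : H v false = 1 := by
        rw [hH]
        simp only [if_neg hv.1]
        norm_num
      have hHt : H v true = Real.exp (lam * w v) := by
        rw [hH]
        simp only [if_neg hv.1]
        norm_num
      rw [hHf, hHt]
      ring
    rw [hprod]
    calc ∏ v ∈ Finset.univ.erase u, (1 + (k:ℝ)⁻¹ * (Real.exp (lam * w v) - 1))
        ≤ ∏ v ∈ Finset.univ.erase u, Real.exp ((k:ℝ)⁻¹ * (Real.exp (lam * w v) - 1)) := by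
          apply Finset.prod_le_prod
          · intro v _
            have h1 : 0 ≤ lam * w v := mul_nonneg hlam0.le (hwnn v)
            have h2 := Real.one_le_exp h1
            have h3 : (0:ℝ) ≤ (k:ℝ)⁻¹ := by positivity
            nlinarith
          · intro v _
            have := Real.add_one_le_exp ((k:ℝ)⁻¹ * (Real.exp (lam * w v) - 1))
            linarith
      _ = Real.exp (∑ v ∈ Finset.univ.erase u, (k:ℝ)⁻¹ * (Real.exp (lam * w v) - 1)) :=
          (Real.exp_sum _ _).symm
      _ = Real.exp ((k:ℝ)⁻¹ * ∑ v ∈ Finset.univ.erase u, (Real.exp (lam * w v) - 1)) := by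
          rw [Finset.mul_sum]
  -- tail bound
  have heps : Real.exp (-lam * T) *
      Real.exp ((k:ℝ)⁻¹ * ∑ v ∈ Finset.univ.erase u, (Real.exp (lam * w v) - 1))
      ≤ L ^ (-(1.89:ℝ)) := by
    rw [← Real.exp_add, Real.rpow_def_of_pos (by linarith : (0:ℝ) < L)]
    apply Real.exp_le_exp.mpr
    -- need : -lam * T + (1/k) * S ≤ log L * (-1.89)
    have hSk : (k:ℝ)⁻¹ * ∑ v ∈ Finset.univ.erase u, (Real.exp (lam * w v) - 1)
        ≤ lam * (26 * L / k) := by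
      rw [div_eq_mul_inv]
      calc (k:ℝ)⁻¹ * ∑ v ∈ Finset.univ.erase u, (Real.exp (lam * w v) - 1)
          ≤ (k:ℝ)⁻¹ * (26 * lam * L) := by
            apply mul_le_mul_of_nonneg_left hS (by positivity)
        _ = lam * (26 * L * (k:ℝ)⁻¹) := by ring
    have hterm1 : 1.89 * Real.log L ≤ lam * (25 * L3) := by
      have hL30 : (0:ℝ) < L3 := by linarith
      have : lam * (25 * L3) = 25 * (21/400) * L2 + 25 * L3 * 1 := by
        rw [hlamdef]; field_simp
      rw [hlogL, this]
      nlinarith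
    have hterm2 : 0 ≤ lam * ((41 / 9) * L / (k * L2)) := by positivity
    have hTsplit : lam * T = lam * (25 * L3) + lam * ((41 / 9) * L / (k * L2))
        + lam * (26 * L / k) := by rw [hT]; ring
    nlinarith [hSk, hterm1, hterm2, hTsplit]
  -- endgame in ℝ≥0∞
  set G : Set ((Fin n × Fin n) → Bool) := {ω | Z ω ≤ T} with hG
  have hGm : MeasurableSet G := .of_discrete
  have hsubset : Gᶜ ⊆ {ω | T ≤ Z ω} := by
    intro ω hω
    simp only [hG, Set.mem_compl_iff, Set.mem_setOf_eq, not_le] at hω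
    exact le_of_lt hω
  have hbad : μ Gᶜ ≤ ENNReal.ofReal (L ^ (-(1.89:ℝ))) := by
    refine (measure_mono hsubset).trans ?_
    rw [ENNReal.le_ofReal_iff_toReal_le (measure_ne_top μ _) (by positivity)]
    exact hcher.trans ((mul_le_mul_of_nonneg_left hmgf (by positivity)).trans heps)
  have hfinal : ENNReal.ofReal (1 - L ^ (-(1.89:ℝ))) ≤ μ G := by
    have h1 : ENNReal.ofReal (1 - L ^ (-(1.89:ℝ)))
        = 1 - ENNReal.ofReal (L ^ (-(1.89:ℝ))) := by
      rw [ENNReal.ofReal_sub _ (by positivity), ENNReal.ofReal_one]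
    have h2 : μ G = 1 - μ Gᶜ := by
      conv_lhs => rw [← compl_compl G]
      exact prob_compl_eq_one_sub hGm.compl
    rw [h1, h2]
    exact tsub_le_tsub_left hbad 1
  exact hfinal
end
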